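/- arXiv:2508.06068 — 5 statements merged into one kernel-verified Lean document; each statement's English description precedes it below -/
import Mathlib

section
/- Let A be a commonly graded algebra (a locally finite, bounded-below Z-graded algebra over a field k). If L is a maximal graded left ideal of A, then L contains A_{>-b} where b = inf{ i | A_i ≠ 0 }. Consequently the graded Jacobson radical J of A contains A_{>-b}. -/
open DirectSum

variable (k : Type) [Field k] (A : Type) [Ring A] [Algebra k A]

/-- A `ℤ`-graded algebra is *commonly graded* if it is locally finite and bounded below. -/
def CommonlyGraded (𝒜 : ℤ → Submodule k A) : Prop :=
  (∀ i : ℤ, FiniteDimensional k (𝒜 i)) ∧ ∃ b : ℤ, ∀ i : ℤ, i < b → 𝒜 i = ⊥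

/-- A maximal graded left ideal: a homogeneous proper left ideal which is maximal among
homogeneous proper left ideals. -/
def IsMaxGradedLeftIdeal (𝒜 : ℤ → Submodule k A) [GradedRing 𝒜] (L : Ideal A) : Prop :=
  Ideal.IsHomogeneous 𝒜 L ∧ L ≠ ⊤ ∧
    ∀ I : Ideal A, Ideal.IsHomogeneous 𝒜 I → I ≠ ⊤ → L ≤ I → I = L

/-- The graded Jacobson radical: the intersection of all maximal graded left ideals. -/
noncomputable def grJacobson (𝒜 : ℤ → Submodule k A) [GradedRing 𝒜] : Ideal A :=
  sInf {L : Ideal A | IsMaxGradedLeftIdeal k A 𝒜 L}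

theorem stmt_0 (𝒜 : ℤ → Submodule k A) [GradedRing 𝒜]
    (hA : CommonlyGraded k A 𝒜) (b : ℤ) (hb : IsLeast {i : ℤ | 𝒜 i ≠ ⊥} b) :
    (∀ L : Ideal A, IsMaxGradedLeftIdeal k A 𝒜 L →
      ∀ i : ℤ, -b < i → ∀ x ∈ 𝒜 i, x ∈ L) ∧
    (∀ i : ℤ, -b < i → ∀ x ∈ 𝒜 i, x ∈ grJacobson k A 𝒜) := by
  have hbot : ∀ j : ℤ, j < b → 𝒜 j = ⊥ := by
    intro j hj
    by_contra h
    exact absurd (hb.2 h) (not_le.mpr hj)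
  have key : ∀ L : Ideal A, IsMaxGradedLeftIdeal k A 𝒜 L →
      ∀ i : ℤ, -b < i → ∀ x ∈ 𝒜 i, x ∈ L := by
    intro L hL i hi x hx
    by_contra hxL
    obtain ⟨hLhom, hLne, hLmax⟩ := hL
    have hIhom : Ideal.IsHomogeneous 𝒜 (L ⊔ Ideal.span {x}) :=
      hLhom.sup (Ideal.homogeneous_span 𝒜 {x} (by
        rintro r hr
        rw [Set.mem_singleton_iff] at hr
        exact ⟨i, hr ▸ hx⟩))
    have hItop : L ⊔ Ideal.span {x} = ⊤ := by
      by_contra hIt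
      have heq := hLmax _ hIhom hIt le_sup_left
      exact hxL (heq ▸ (le_sup_right : Ideal.span {x} ≤ L ⊔ Ideal.span {x})
        (Ideal.subset_span rfl))
    have h1 : (1 : A) ∈ L ⊔ Ideal.span {x} := hItop ▸ Submodule.mem_top
    obtain ⟨l, hl, y, hy, hly⟩ := Submodule.mem_sup.mp h1
    obtain ⟨a, rfl⟩ := Submodule.mem_span_singleton.mp hy
    have hproj : ∀ c : A, GradedRing.proj 𝒜 0 (c * x) = 0 := by
      intro c
      induction c using DirectSum.Decomposition.inductionOn 𝒜 with
      | zero => simp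
      | @homogeneous j m =>
        have hmx : (m : A) * x ∈ 𝒜 (j + i) := SetLike.mul_mem_graded m.2 hx
        by_cases hji : j + i = 0
        · have hj : j < b := by omega
          have : (m : A) = 0 := (Submodule.eq_bot_iff _).mp (hbot j hj) _ m.2
          simp [this]
        · rw [GradedRing.proj_apply, DirectSum.decompose_of_mem_ne 𝒜 hmx hji]
      | add c1 c2 ih1 ih2 =>
        rw [add_mul, map_add, ih1, ih2, add_zero]
    have h1' : GradedRing.proj 𝒜 0 (1 : A) = 1 := by
      rw [GradedRing.proj_apply, DirectSum.decompose_of_mem_same 𝒜 (SetLike.one_mem_graded 𝒜)]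
    have : (1 : A) ∈ L := by
      have := congrArg (GradedRing.proj 𝒜 0) hly
      rw [map_add, h1', smul_eq_mul, hproj a, add_zero] at this
      rw [← this]
      exact hLhom 0 hl
    exact hLne (Ideal.eq_top_iff_one L |>.mpr this)
  refine ⟨key, fun i hi x hx => ?_⟩
  rw [grJacobson, Submodule.mem_sInf]
  intro L hL
  exact key L hL i hi x hx
end

section
/- Let A be a commonly graded algebra with graded Jacobson radical J and b = b_l(A) = inf{ i | A_i ≠ 0 }. Then the quotient A/J is concentrated in degrees between b and -b; in particular A/J is finite-dimensional over k. -/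
/-!
An element `x` of degree `i` with `A_{-i} = 0` lies in every maximal graded left ideal `L`:
otherwise `L + A x = A`, so `1 = l + a x`, and comparing degree-`0` components gives
`1 = l_0 + a_{-i} x = l_0 ∈ L`. For `i > -b` we have `-i < b`, so `A_{-i} = 0`; for `i < b`
already `A_i = 0`. Hence `A = A_{[b, -b]} + J`, and `A/J` is a quotient of the
finite-dimensional space `A_b ⊕ ⋯ ⊕ A_{-b}`.
-/

open DirectSum

variable (k : Type) [Field k] (A : Type) [Ring A] [Algebra k A]

/-- The graded Jacobson radical viewed as a `k`-subspace of `A`. -/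
noncomputable def grJacobsonK (𝒜 : ℤ → Submodule k A) [GradedRing 𝒜] : Submodule k A :=
  Submodule.restrictScalars k (grJacobson k A 𝒜)

/-- `A_{≥ i}`, the sum of the homogeneous components of degree at least `i`. -/
def AgeSub (𝒜 : ℤ → Submodule k A) (i : ℤ) : Submodule k A :=
  ⨆ j : ℤ, ⨆ _ : i ≤ j, 𝒜 j

section

variable {k A}

section

variable {ι : Type*} [AddGroup ι] [DecidableEq ι] (𝒜 : ι → Submodule k A) [GradedRing 𝒜]

theorem DirectSum.coe_decompose_mul_zero_of_neg_eq_bot {i : ι} {x : A} (hx : x ∈ 𝒜 i)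
    (hi : 𝒜 (-i) = ⊥) (a : A) : (decompose 𝒜 (a * x) 0 : A) = 0 := by
  have hai : (decompose 𝒜 a (-i) : A) = 0 := by
    simpa [hi] using (decompose 𝒜 a (-i)).2
  rw [← neg_add_cancel i, coe_decompose_mul_add_of_right_mem 𝒜 hx, hai, zero_mul]

theorem Ideal.IsHomogeneous.sup_span_singleton_ne_top {L : Ideal A} (hL : L.IsHomogeneous 𝒜)
    (hLtop : L ≠ ⊤) {i : ι} {x : A} (hx : x ∈ 𝒜 i) (hi : 𝒜 (-i) = ⊥) :
    L ⊔ Ideal.span {x} ≠ ⊤ := by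
  intro htop
  obtain ⟨l, hl, _, hax, hlax⟩ := Submodule.mem_sup.1 (htop ▸ Submodule.mem_top : (1 : A) ∈ _)
  obtain ⟨a, rfl⟩ := Ideal.mem_span_singleton'.1 hax
  have h0 : (decompose 𝒜 (1 : A) 0 : A) = decompose 𝒜 l 0 := by
    rw [← hlax, decompose_add, DirectSum.add_apply, Submodule.coe_add,
      coe_decompose_mul_zero_of_neg_eq_bot 𝒜 hx hi, add_zero]
  rw [decompose_of_mem_same 𝒜 SetLike.GradedOne.one_mem] at h0
  exact hLtop ((Ideal.eq_top_iff_one L).2 (h0 ▸ hL 0 hl))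

end

theorem IsMaxGradedLeftIdeal.mem_of_neg_eq_bot {𝒜 : ℤ → Submodule k A} [GradedRing 𝒜]
    {L : Ideal A} (hL : IsMaxGradedLeftIdeal k A 𝒜 L) {i : ℤ} {x : A} (hx : x ∈ 𝒜 i)
    (hi : 𝒜 (-i) = ⊥) : x ∈ L := by
  obtain ⟨hLhom, hLtop, hLmax⟩ := hL
  have hspan : (Ideal.span {x}).IsHomogeneous 𝒜 :=
    Ideal.homogeneous_span 𝒜 {x} (by rintro y rfl; exact ⟨i, hx⟩)
  have hsup :=
    hLmax _ (hLhom.sup hspan) (hLhom.sup_span_singleton_ne_top 𝒜 hLtop hx hi) le_sup_left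
  exact hsup ▸ Ideal.mem_sup_right (Ideal.mem_span_singleton_self x)

theorem mem_grJacobson_of_neg_eq_bot {𝒜 : ℤ → Submodule k A} [GradedRing 𝒜] {i : ℤ} {x : A}
    (hx : x ∈ 𝒜 i) (hi : 𝒜 (-i) = ⊥) : x ∈ grJacobson k A 𝒜 :=
  Ideal.mem_sInf.2 fun _ hL => hL.mem_of_neg_eq_bot hx hi

end

theorem Submodule.finite_quotient_of_iSup_eq_top {R M ι : Type*} [Ring R] [AddCommGroup M]
    [Module R M] (𝒜 : ι → Submodule R M) (h𝒜 : ⨆ i, 𝒜 i = ⊤) (s : Finset ι)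
    (hfin : ∀ i ∈ s, Module.Finite R (𝒜 i)) (J : Submodule R M) (hJ : ∀ i ∉ s, 𝒜 i ≤ J) :
    Module.Finite R (M ⧸ J) := by
  have hS : (s.sup 𝒜).FG :=
    Submodule.fg_finset_sup s 𝒜 fun i hi => (Module.Finite.iff_fg).1 (hfin i hi)
  have hSJ : J ⊔ s.sup 𝒜 = ⊤ := by
    refine eq_top_iff.2 (h𝒜 ▸ iSup_le fun i => ?_)
    by_cases hi : i ∈ s
    · exact le_sup_of_le_right (Finset.le_sup hi)
    · exact le_sup_of_le_left (hJ i hi)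
  rw [Module.finite_def, ← (Submodule.map_mkQ_eq_top J _).2 hSJ]
  exact hS.map _

theorem stmt_1 (𝒜 : ℤ → Submodule k A) [GradedRing 𝒜]
    (hA : CommonlyGraded k A 𝒜) (b : ℤ) (hb : IsLeast {i : ℤ | 𝒜 i ≠ ⊥} b) :
    (∀ i : ℤ, (i < b ∨ -b < i) → ∀ x ∈ 𝒜 i, x ∈ grJacobson k A 𝒜) ∧
    FiniteDimensional k (A ⧸ grJacobsonK k A 𝒜) := by
  have hbot : ∀ i < b, 𝒜 i = ⊥ := fun i hi => not_not.1 fun h => (hb.2 h).not_gt hi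
  have hJ : ∀ i : ℤ, (i < b ∨ -b < i) → ∀ x ∈ 𝒜 i, x ∈ grJacobson k A 𝒜 := by
    rintro i (hi | hi) x hx
    · rw [hbot i hi, Submodule.mem_bot] at hx
      exact hx ▸ zero_mem _
    · exact mem_grJacobson_of_neg_eq_bot hx (hbot (-i) (by omega))
  refine ⟨hJ, Submodule.finite_quotient_of_iSup_eq_top 𝒜
    (Decomposition.isInternal 𝒜).submodule_iSup_eq_top (Finset.Icc b (-b))
    (fun i _ => hA.1 i) _ fun i hi x hx => hJ i ?_ x hx⟩
  rw [Finset.mem_Icc, not_and_or, not_le, not_le] at hi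
  exact hi
end

section
/- Let A be a commonly graded algebra with graded Jacobson radical J. For every integer i > 0 there exists an integer n_i such that J^{n_i} ⊆ A_{≥ i}. Consequently ⋂_n J^n = 0. -/
set_option maxHeartbeats 1000000
set_option linter.unusedSectionVars false
set_option linter.unusedVariables false


open DirectSum

variable (k : Type) [Field k] (A : Type) [Ring A] [Algebra k A]

section SG3aux
variable {k A}
variable (𝒜 : ℤ → Submodule k A) [GradedRing 𝒜]

/-- Homogeneity for `k`-submodules. -/
def SG3Homog (S : Submodule k A) : Prop :=
  ∀ (i : ℤ) ⦃a : A⦄, a ∈ S → (DirectSum.decompose 𝒜 a i : A) ∈ S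

lemma SG3Homog_top : SG3Homog 𝒜 (⊤ : Submodule k A) := fun _ _ _ => trivial

lemma SG3Homog_sup {S T : Submodule k A} (hS : SG3Homog 𝒜 S) (hT : SG3Homog 𝒜 T) :
    SG3Homog 𝒜 (S ⊔ T) := by
  intro i a ha
  rcases Submodule.mem_sup.1 ha with ⟨s, hs, t, ht, rfl⟩
  rw [DirectSum.decompose_add]
  exact Submodule.mem_sup.2 ⟨_, hS i hs, _, hT i ht, rfl⟩

lemma SG3Homog_span {s : Set A} (hs : ∀ x ∈ s, SetLike.IsHomogeneousElem 𝒜 x) :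
    SG3Homog 𝒜 (Submodule.span k s) := by
  intro i a ha
  induction ha using Submodule.span_induction with
  | mem x hx =>
    obtain ⟨j, hj⟩ := hs x hx
    by_cases hij : i = j
    · subst hij
      rw [DirectSum.decompose_of_mem_same 𝒜 hj]
      exact Submodule.subset_span hx
    · rw [DirectSum.decompose_of_mem_ne 𝒜 hj (Ne.symm hij)]
      exact Submodule.zero_mem _
  | zero => rw [DirectSum.decompose_zero]; simp
  | add x y hx hy ihx ihy =>
    rw [DirectSum.decompose_add]
    push_cast
    exact Submodule.add_mem _ ihx ihy
  | smul c x hx ihx =>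
    rw [DirectSum.decompose_smul]
    push_cast
    exact Submodule.smul_mem _ _ ihx

lemma SG3_eq_span_homog {S : Submodule k A} (hS : SG3Homog 𝒜 S) :
    S = Submodule.span k {x | x ∈ S ∧ SetLike.IsHomogeneousElem 𝒜 x} := by
  classical
  apply le_antisymm
  · intro a ha
    rw [← DirectSum.sum_support_decompose 𝒜 a]
    refine Submodule.sum_mem _ fun j _ => Submodule.subset_span ⟨hS j ha, ⟨j, SetLike.coe_mem _⟩⟩
  · rw [Submodule.span_le]; exact fun x hx => hx.1

lemma SG3Homog_mul {S T : Submodule k A} (hS : SG3Homog 𝒜 S) (hT : SG3Homog 𝒜 T) :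
    SG3Homog 𝒜 (S * T) := by
  rw [SG3_eq_span_homog 𝒜 hS, SG3_eq_span_homog 𝒜 hT, Submodule.span_mul_span]
  apply SG3Homog_span
  rintro x ⟨y, ⟨hyS, hy⟩, z, ⟨hzS, hz⟩, rfl⟩
  exact SetLike.IsHomogeneousElem.mul hy hz

lemma SG3Homog_pow {S : Submodule k A} (hS : SG3Homog 𝒜 S) (n : ℕ) :
    SG3Homog 𝒜 (S ^ n) := by
  induction n with
  | zero =>
    rw [pow_zero, Submodule.one_eq_span]
    exact SG3Homog_span 𝒜 (by rintro x rfl; exact ⟨0, SetLike.one_mem_graded 𝒜⟩)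
  | succ n ih => rw [pow_succ]; exact SG3Homog_mul 𝒜 ih hS

lemma SG3_mem_age {i j : ℤ} (hij : i ≤ j) {x : A} (hx : x ∈ 𝒜 j) :
    x ∈ AgeSub k A 𝒜 i := by
  refine Submodule.mem_iSup_of_mem j ?_
  exact Submodule.mem_iSup_of_mem hij hx

lemma SG3_age_eq_span (i : ℤ) :
    AgeSub k A 𝒜 i = Submodule.span k {x | ∃ j, i ≤ j ∧ x ∈ 𝒜 j} := by
  apply le_antisymm
  · refine iSup_le fun j => iSup_le fun hij => ?_
    exact fun x hx => Submodule.subset_span ⟨j, hij, hx⟩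
  · rw [Submodule.span_le]
    rintro x ⟨j, hij, hx⟩
    exact SG3_mem_age 𝒜 hij hx

lemma SG3_age_antitone {i i' : ℤ} (h : i ≤ i') : AgeSub k A 𝒜 i' ≤ AgeSub k A 𝒜 i := by
  refine iSup_le fun j => iSup_le fun hij => ?_
  exact fun x hx => SG3_mem_age 𝒜 (le_trans h hij) hx

lemma SG3_age_homog (i : ℤ) : SG3Homog 𝒜 (AgeSub k A 𝒜 i) := by
  rw [SG3_age_eq_span]
  exact SG3Homog_span 𝒜 (by rintro x ⟨j, _, hx⟩; exact ⟨j, hx⟩)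

lemma SG3_age_mul (p q : ℤ) :
    AgeSub k A 𝒜 p * AgeSub k A 𝒜 q ≤ AgeSub k A 𝒜 (p + q) := by
  rw [SG3_age_eq_span 𝒜 p, SG3_age_eq_span 𝒜 q, Submodule.span_mul_span,
    Submodule.span_le]
  rintro x ⟨y, ⟨j, hij, hy⟩, z, ⟨l, hil, hz⟩, rfl⟩
  exact SG3_mem_age 𝒜 (add_le_add hij hil) (SetLike.mul_mem_graded hy hz)

lemma SG3_top_le_age {b b' : ℤ} (hb : ∀ i : ℤ, i < b → 𝒜 i = ⊥) (hb' : b' ≤ b) :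
    (⊤ : Submodule k A) ≤ AgeSub k A 𝒜 b' := by
  classical
  intro a _
  rw [← DirectSum.sum_support_decompose 𝒜 a]
  refine Submodule.sum_mem _ fun j _ => ?_
  rcases le_or_gt b j with hj | hj
  · exact SG3_mem_age 𝒜 (le_trans hb' hj) (SetLike.coe_mem _)
  · have : (DirectSum.decompose 𝒜 a j : A) ∈ (⊥ : Submodule k A) := by
      rw [← hb j hj]; exact SetLike.coe_mem _
    rw [Submodule.mem_bot] at this
    rw [this]; exact Submodule.zero_mem _

lemma SG3_age_comp_eq_zero {i : ℤ} {x : A} (hx : x ∈ AgeSub k A 𝒜 i) {j : ℤ} (hj : j < i) :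
    (DirectSum.decompose 𝒜 x j : A) = 0 := by
  rw [SG3_age_eq_span] at hx
  induction hx using Submodule.span_induction with
  | mem y hy =>
    obtain ⟨l, hil, hy⟩ := hy
    exact DirectSum.decompose_of_mem_ne 𝒜 hy (by omega)
  | zero => rw [DirectSum.decompose_zero]; simp
  | add y z _ _ ihy ihz =>
    rw [DirectSum.decompose_add, DirectSum.add_apply]
    push_cast [ihy, ihz]; simp
  | smul c y _ ihy =>
    rw [DirectSum.decompose_smul, DFinsupp.smul_apply]
    push_cast [ihy]; simp

lemma SG3_age_inf_eq_zero {x : A} (hx : ∀ i : ℤ, 0 < i → x ∈ AgeSub k A 𝒜 i) : x = 0 := by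
  classical
  have h : ∀ j : ℤ, (DirectSum.decompose 𝒜 x j : A) = 0 := fun j =>
    SG3_age_comp_eq_zero 𝒜
      (hx (max (j + 1) 1) (lt_of_lt_of_le one_pos (le_max_right _ _)))
      (lt_of_lt_of_le (lt_add_one j) (le_max_left _ _))
  rw [← DirectSum.sum_support_decompose 𝒜 x]
  exact Finset.sum_eq_zero fun j _ => h j

lemma SG3_comp_mul_right (y : A) {a : A} {e : ℤ} (ha : a ∈ 𝒜 e) (i : ℤ) :
    (DirectSum.decompose 𝒜 y i : A) * a = (DirectSum.decompose 𝒜 (y * a) (i + e) : A) := by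
  refine DirectSum.Decomposition.inductionOn 𝒜
    (motive := fun y => (DirectSum.decompose 𝒜 y i : A) * a
      = (DirectSum.decompose 𝒜 (y * a) (i + e) : A)) ?_ ?_ ?_ y
  · dsimp only
    rw [DirectSum.decompose_zero, zero_mul, DirectSum.decompose_zero]; simp
  · intro j m
    dsimp only
    by_cases hij : i = j
    · subst hij
      rw [DirectSum.decompose_of_mem_same 𝒜 m.2,
        DirectSum.decompose_of_mem_same 𝒜 (SetLike.mul_mem_graded m.2 ha)]
    · rw [DirectSum.decompose_of_mem_ne 𝒜 m.2 (Ne.symm hij),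
        DirectSum.decompose_of_mem_ne 𝒜 (SetLike.mul_mem_graded m.2 ha)
          (by omega : j + e ≠ i + e), zero_mul]
  · intro m m' ih ih'
    dsimp only at ih ih' ⊢
    rw [DirectSum.decompose_add, DirectSum.add_apply, add_mul,
      DirectSum.decompose_add, DirectSum.add_apply]
    push_cast
    rw [add_mul, ih, ih']

lemma SG3_J_mul_hom_mem {L : Ideal A} (hL : IsMaxGradedLeftIdeal k A 𝒜 L)
    {a : A} {e : ℤ} (ha : a ∈ 𝒜 e) {x : A} (hx : x ∈ grJacobson k A 𝒜) :
    x * a ∈ L := by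
  classical
  by_cases haL : a ∈ L
  · exact L.smul_mem x haL
  set K : Ideal A := Submodule.comap (LinearMap.toSpanSingleton A A a) L with hK
  have hKmem : ∀ y : A, y ∈ K ↔ y * a ∈ L := by
    intro y
    rw [hK, Submodule.mem_comap, LinearMap.toSpanSingleton_apply, smul_eq_mul]
  have hKmax : IsMaxGradedLeftIdeal k A 𝒜 K := by
    refine ⟨?_, ?_, ?_⟩
    · intro i y hy
      rw [hKmem] at hy ⊢
      rw [SG3_comp_mul_right 𝒜 y ha i]
      exact hL.1 _ hy
    · intro h
      apply haL
      have : (1:A) ∈ K := h ▸ trivial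
      rw [hKmem, one_mul] at this
      exact this
    · intro I hIhom hItop hKI
      refine le_antisymm ?_ hKI
      by_contra hIK
      obtain ⟨w, hwI, hwa⟩ : ∃ w ∈ I, ¬ w * a ∈ L := by
        rw [SetLike.le_def] at hIK; push_neg at hIK
        obtain ⟨w, hwI, hwK⟩ := hIK
        exact ⟨w, hwI, fun h => hwK ((hKmem w).2 h)⟩
      obtain ⟨i₀, hva⟩ : ∃ i₀ : ℤ, ¬ (DirectSum.decompose 𝒜 w i₀ : A) * a ∈ L := by
        by_contra hall
        push_neg at hall
        apply hwa
        rw [← DirectSum.sum_support_decompose 𝒜 w, Finset.sum_mul]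
        exact Submodule.sum_mem _ fun j _ => hall j
      set v : A := (DirectSum.decompose 𝒜 w i₀ : A) with hv
      have hvI : v ∈ I := hIhom i₀ hwI
      have hv𝒜 : v ∈ 𝒜 i₀ := SetLike.coe_mem _
      set L' : Ideal A := L ⊔ Ideal.span {v * a} with hL'
      have hL'hom : Ideal.IsHomogeneous 𝒜 L' :=
        Ideal.IsHomogeneous.sup hL.1 (Ideal.homogeneous_span 𝒜 _ (by
          rintro x ⟨rfl⟩
          exact ⟨i₀ + e, SetLike.mul_mem_graded hv𝒜 ha⟩))
      by_cases hL'top : L' = ⊤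
      · have haL' : a ∈ L' := hL'top ▸ trivial
        obtain ⟨l, hl, z, hz, hlz⟩ := Submodule.mem_sup.1 haL'
        obtain ⟨c, rfl⟩ := Submodule.mem_span_singleton.1 hz
        have hc : (1 - c * v) * a = l := by
          rw [smul_eq_mul] at hlz
          have hgoal : a - c * (v * a) = l := by
            rw [sub_eq_iff_eq_add']
            exact hlz.symm.trans (add_comm _ _)
          rw [sub_mul, one_mul, mul_assoc]
          exact hgoal
        have h1K : (1 - c * v) ∈ I := hKI ((hKmem _).2 (hc ▸ hl))
        have h2I : c * v ∈ I := I.smul_mem c hvI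
        have h1I : (1:A) ∈ I := by
          have : (1:A) = (1 - c * v) + c * v := by abel
          rw [this]
          exact Submodule.add_mem _ h1K h2I
        exact hItop ((Ideal.eq_top_iff_one I).2 h1I)
      · have heq := hL.2.2 L' hL'hom hL'top le_sup_left
        have hmem : v * a ∈ L' := Ideal.mem_sup_right (Ideal.subset_span rfl)
        exact hva (heq ▸ hmem)
  have : grJacobson k A 𝒜 ≤ K := sInf_le hKmax
  exact (hKmem x).1 (this hx)

lemma SG3_J_homog : SG3Homog 𝒜 (grJacobsonK k A 𝒜) := by
  intro i a ha
  rw [grJacobsonK, Submodule.restrictScalars_mem, grJacobson, Submodule.mem_sInf] at ha ⊢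
  exact fun L hL => hL.1 i (ha L hL)

lemma SG3_top_mul_J : (⊤ : Submodule k A) * grJacobsonK k A 𝒜 ≤ grJacobsonK k A 𝒜 := by
  rw [Submodule.mul_le]
  intro m _ n hn
  rw [grJacobsonK, Submodule.restrictScalars_mem] at hn ⊢
  exact Submodule.smul_mem _ m hn

lemma SG3_J_mul_mem {x : A} (hx : x ∈ grJacobsonK k A 𝒜) (b : A) :
    x * b ∈ grJacobsonK k A 𝒜 := by
  classical
  rw [grJacobsonK, Submodule.restrictScalars_mem, grJacobson, Submodule.mem_sInf] at hx ⊢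
  intro L hL
  rw [← DirectSum.sum_support_decompose 𝒜 b, Finset.mul_sum]
  refine Submodule.sum_mem _ fun j _ => ?_
  refine SG3_J_mul_hom_mem 𝒜 hL (SetLike.coe_mem _) ?_
  rw [grJacobson, Submodule.mem_sInf]
  exact hx

lemma SG3_J_mul_top : grJacobsonK k A 𝒜 * (⊤ : Submodule k A) ≤ grJacobsonK k A 𝒜 := by
  rw [Submodule.mul_le]
  exact fun m hm n _ => SG3_J_mul_mem 𝒜 hm n

lemma SG3_exists_max {L : Ideal A} (hhom : Ideal.IsHomogeneous 𝒜 L) (hne : L ≠ ⊤) :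
    ∃ M : Ideal A, IsMaxGradedLeftIdeal k A 𝒜 M ∧ L ≤ M := by
  set s : Set (Ideal A) := {I | Ideal.IsHomogeneous 𝒜 I ∧ I ≠ ⊤ ∧ L ≤ I} with hs
  have hub : ∀ c ⊆ s, IsChain (· ≤ ·) c → ∀ y ∈ c, ∃ ub ∈ s, ∀ z ∈ c, z ≤ ub := by
    intro c hcs hchain y hy
    have hdir : DirectedOn (· ≤ ·) c := hchain.directedOn
    have hne' : c.Nonempty := ⟨y, hy⟩
    refine ⟨sSup c, ⟨?_, ?_, ?_⟩, fun z hz => le_sSup hz⟩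
    · intro i r hr
      obtain ⟨I, hIc, hrI⟩ := (Submodule.mem_sSup_of_directed hne' hdir).1 hr
      exact le_sSup hIc ((hcs hIc).1 i hrI)
    · intro htop
      have h1 : (1:A) ∈ sSup c := htop ▸ trivial
      obtain ⟨I, hIc, h1I⟩ := (Submodule.mem_sSup_of_directed hne' hdir).1 h1
      exact (hcs hIc).2.1 ((Ideal.eq_top_iff_one I).2 h1I)
    · exact le_trans (hcs hy).2.2 (le_sSup hy)
  obtain ⟨m, hLm, hmax⟩ := zorn_le_nonempty₀ s hub L ⟨hhom, hne, le_rfl⟩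
  exact ⟨m, ⟨hmax.1.1, hmax.1.2.1, fun I hI hIt hmI =>
    le_antisymm (hmax.2 ⟨hI, hIt, le_trans hLm hmI⟩ hmI) hmI⟩, hLm⟩

lemma SG3_quasi_reg {t : A} (ht : t ∈ grJacobsonK k A 𝒜) (ht0 : t ∈ 𝒜 0) :
    ∃ x : A, x * (1 - t) = 1 := by
  by_cases h : Ideal.span {(1:A) - t} = ⊤
  · have h1 : (1:A) ∈ Ideal.span {(1:A) - t} := h ▸ trivial
    obtain ⟨c, hc⟩ := Submodule.mem_span_singleton.1 h1
    exact ⟨c, by rw [← smul_eq_mul]; exact hc⟩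
  · exfalso
    have hhom : Ideal.IsHomogeneous 𝒜 (Ideal.span {(1:A) - t}) :=
      Ideal.homogeneous_span 𝒜 _ (by
        rintro x ⟨rfl⟩
        exact ⟨0, Submodule.sub_mem _ (SetLike.one_mem_graded 𝒜) ht0⟩)
    obtain ⟨M, hM, hLM⟩ := SG3_exists_max 𝒜 hhom h
    have h1t : (1:A) - t ∈ M := hLM (Ideal.subset_span rfl)
    have htM : t ∈ M := by
      rw [grJacobsonK, Submodule.restrictScalars_mem, grJacobson] at ht
      exact (Submodule.mem_sInf.1 ht) M hM
    have : (1:A) ∈ M := by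
      have h' : (1:A) = ((1:A) - t) + t := by abel
      rw [h']
      exact Submodule.add_mem _ h1t htM
    exact hM.2.1 ((Ideal.eq_top_iff_one M).2 this)

lemma SG3_pow_le_J {n : ℕ} (hn : 1 ≤ n) : grJacobsonK k A 𝒜 ^ n ≤ grJacobsonK k A 𝒜 := by
  induction n with
  | zero => omega
  | succ n ih =>
    rcases Nat.eq_or_lt_of_le hn with h | h
    · rw [← h, pow_one]
    · rw [pow_succ]
      exact le_trans (mul_le_mul' (ih (by omega)) le_top) (SG3_J_mul_top 𝒜)

lemma SG3_top_mul_pow {n : ℕ} (hn : 1 ≤ n) :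
    (⊤ : Submodule k A) * grJacobsonK k A 𝒜 ^ n ≤ grJacobsonK k A 𝒜 ^ n := by
  induction n with
  | zero => omega
  | succ n ih =>
    rcases Nat.eq_or_lt_of_le hn with h | h
    · rw [← h, pow_one]; exact SG3_top_mul_J 𝒜
    · rw [pow_succ, ← mul_assoc]
      exact mul_le_mul' (ih (by omega)) le_rfl

lemma SG3_pow_mul_top {n : ℕ} (hn : 1 ≤ n) :
    grJacobsonK k A 𝒜 ^ n * (⊤ : Submodule k A) ≤ grJacobsonK k A 𝒜 ^ n := by
  induction n with
  | zero => omega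
  | succ n ih =>
    rcases Nat.eq_or_lt_of_le hn with h | h
    · rw [← h, pow_one]; exact SG3_J_mul_top 𝒜
    · rw [pow_succ', mul_assoc]
      exact mul_le_mul' le_rfl (ih (by omega))

lemma SG3_pow_antitone {n m : ℕ} (hn : 1 ≤ n) (hnm : n ≤ m) :
    grJacobsonK k A 𝒜 ^ m ≤ grJacobsonK k A 𝒜 ^ n := by
  induction m with
  | zero => omega
  | succ m ih =>
    rcases Nat.eq_or_lt_of_le hnm with h | h
    · rw [h]
    · refine le_trans ?_ (ih (by omega))
      rw [pow_succ]
      exact le_trans (mul_le_mul' le_rfl le_top) (SG3_pow_mul_top 𝒜 (by omega))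

lemma SG3_engine (hfin : ∀ i : ℤ, FiniteDimensional k (𝒜 i)) {b : ℤ}
    (hb : ∀ i : ℤ, i < b → 𝒜 i = ⊥) {i : ℤ} (hi : 0 < i) :
    ∃ n : ℕ, grJacobsonK k A 𝒜 ^ n ≤ AgeSub k A 𝒜 i := by
  classical
  set b' : ℤ := min b 0 with hb'
  have hb'b : b' ≤ b := min_le_left _ _
  set s : ℤ := i - 2 * b' with hs
  set Jk := grJacobsonK k A 𝒜 with hJk
  set I : Submodule k A := ⊤ * AgeSub k A 𝒜 s * ⊤ with hI
  have htopage : (⊤ : Submodule k A) ≤ AgeSub k A 𝒜 b' := SG3_top_le_age 𝒜 hb hb'b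
  have hIle : I ≤ AgeSub k A 𝒜 i := by
    have h1 : I ≤ AgeSub k A 𝒜 b' * AgeSub k A 𝒜 s * AgeSub k A 𝒜 b' :=
      mul_le_mul' (mul_le_mul' htopage le_rfl) htopage
    have h2 : AgeSub k A 𝒜 b' * AgeSub k A 𝒜 s * AgeSub k A 𝒜 b'
        ≤ AgeSub k A 𝒜 (b' + s + b') :=
      le_trans (mul_le_mul' (SG3_age_mul 𝒜 b' s) le_rfl) (SG3_age_mul 𝒜 (b' + s) b')
    have h3 : b' + s + b' = i := by omega
    rw [h3] at h2
    exact le_trans h1 h2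
  have hageI : AgeSub k A 𝒜 s ≤ I := by
    intro x hx
    have h1 : (1:A) * x * 1 ∈ I :=
      Submodule.mul_mem_mul (Submodule.mul_mem_mul trivial hx) trivial
    simpa using h1
  have htopI : (⊤ : Submodule k A) * I ≤ I := by
    rw [hI, ← mul_assoc, ← mul_assoc]
    exact mul_le_mul' (mul_le_mul' le_top le_rfl) le_rfl
  have hItop : I * (⊤ : Submodule k A) ≤ I := by
    rw [hI, mul_assoc]
    exact mul_le_mul' le_rfl le_top
  have hIhom : SG3Homog 𝒜 I :=
    SG3Homog_mul 𝒜 (SG3Homog_mul 𝒜 (SG3Homog_top 𝒜) (SG3_age_homog 𝒜 s)) (SG3Homog_top 𝒜)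
  -- finite dimensionality of A ⧸ I
  haveI : ∀ j : ℤ, FiniteDimensional k (𝒜 j) := hfin
  set V : Submodule k A := (Finset.Icc b s).sup 𝒜 with hV
  haveI hVfin : FiniteDimensional k V := Submodule.finiteDimensional_finset_sup _ _
  have hVI : V ⊔ I = ⊤ := by
    rw [eq_top_iff]
    intro a _
    rw [← DirectSum.sum_support_decompose 𝒜 a]
    refine Submodule.sum_mem _ fun j _ => ?_
    rcases lt_or_ge j b with h | h
    · have hz : (DirectSum.decompose 𝒜 a j : A) ∈ (⊥ : Submodule k A) := by
        rw [← hb j h]; exact SetLike.coe_mem _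
      rw [Submodule.mem_bot] at hz
      rw [hz]; exact Submodule.zero_mem _
    rcases le_or_gt j s with h2 | h2
    · have hle : 𝒜 j ≤ V := Finset.le_sup (f := 𝒜) (Finset.mem_Icc.2 ⟨h, h2⟩)
      exact Submodule.mem_sup_left (hle (SetLike.coe_mem _))
    · exact Submodule.mem_sup_right (hageI (SG3_mem_age 𝒜 (le_of_lt h2) (SetLike.coe_mem _)))
  haveI hQfin : Module.Finite k (A ⧸ I) := by
    refine Module.Finite.of_surjective ((I.mkQ).comp V.subtype) ?_
    intro q
    obtain ⟨a, rfl⟩ := Submodule.mkQ_surjective I q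
    have ha : a ∈ V ⊔ I := hVI ▸ trivial
    obtain ⟨v, hv, w, hw, rfl⟩ := Submodule.mem_sup.1 ha
    refine ⟨⟨v, hv⟩, ?_⟩
    show I.mkQ v = I.mkQ (v + w)
    rw [map_add]
    have : I.mkQ w = 0 := (Submodule.Quotient.mk_eq_zero I).2 hw
    rw [this, add_zero]
  -- stabilization
  set f : ℕ →o (Submodule k (A ⧸ I))ᵒᵈ :=
    ⟨fun n => Submodule.map I.mkQ (Jk ^ (n+1)),
      fun n m hnm => Submodule.map_mono (SG3_pow_antitone 𝒜 (by omega) (by omega))⟩ with hf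
  obtain ⟨m₀, hm₀⟩ := IsArtinian.monotone_stabilizes f
  set M : ℕ := m₀ + 1 with hM
  set T : Submodule k A := Jk ^ M with hT
  have key : ∀ m : ℕ, M ≤ m → T ⊔ I = Jk ^ m ⊔ I := by
    intro m hm
    have h1 : Submodule.map I.mkQ (Jk ^ (m₀+1)) = Submodule.map I.mkQ (Jk ^ ((m-1)+1)) :=
      hm₀ (m-1) (by omega)
    have hm' : m - 1 + 1 = m := by omega
    rw [hm'] at h1
    have h4 := congrArg (Submodule.comap I.mkQ) h1
    rw [Submodule.comap_map_mkQ, Submodule.comap_map_mkQ] at h4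
    rw [sup_comm I (Jk ^ (m₀+1)), sup_comm I (Jk ^ m)] at h4
    exact h4
  have hTT : T ≤ T * T ⊔ I := by
    have h2 : T ⊔ I = Jk ^ (2*M) ⊔ I := key (2*M) (by omega)
    have h3 : Jk ^ (2*M) = T * T := by rw [hT, two_mul, pow_add]
    rw [h3] at h2
    exact le_trans le_sup_left (le_of_eq h2)
  refine ⟨M, ?_⟩
  suffices hTI : T ≤ I by exact le_trans hTI hIle
  by_contra hTI
  set 𝒰 : Set (Submodule k A) := {U | SG3Homog 𝒜 U ∧ ⊤ * U ≤ U ∧ I ≤ U ∧ ¬ T * U ≤ I} with h𝒰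
  have htop𝒰 : (⊤ : Submodule k A) ∈ 𝒰 := by
    refine ⟨SG3Homog_top 𝒜, le_top, le_top, fun h => hTI ?_⟩
    intro x hx
    have : x * 1 ∈ T * ⊤ := Submodule.mul_mem_mul hx trivial
    rw [mul_one] at this
    exact h this
  obtain ⟨W, ⟨U₀, hU₀𝒰, rfl⟩, hWmin⟩ :=
    IsArtinian.set_has_minimal ((Submodule.map I.mkQ) '' 𝒰) ⟨_, ⟨⊤, htop𝒰, rfl⟩⟩
  have hmin : ∀ U ∈ 𝒰, U ≤ U₀ → U = U₀ := by
    intro U hU hUle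
    have h1 : Submodule.map I.mkQ U ≤ Submodule.map I.mkQ U₀ := Submodule.map_mono hUle
    have h2 : ¬ Submodule.map I.mkQ U < Submodule.map I.mkQ U₀ := hWmin _ ⟨U, hU, rfl⟩
    have h3 : Submodule.map I.mkQ U = Submodule.map I.mkQ U₀ := by
      rcases lt_or_eq_of_le h1 with h | h
      · exact absurd h h2
      · exact h
    have h4 := congrArg (Submodule.comap I.mkQ) h3
    rw [Submodule.comap_map_mkQ, Submodule.comap_map_mkQ,
      sup_eq_right.2 hU.2.2.1, sup_eq_right.2 hU₀𝒰.2.2.1] at h4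
    exact h4
  have hexu : ∃ (e : ℤ) (u : A), u ∈ 𝒜 e ∧ u ∈ U₀ ∧ ¬ T * Submodule.span k {u} ≤ I := by
    by_contra hall
    push_neg at hall
    apply hU₀𝒰.2.2.2
    rw [Submodule.mul_le]
    intro t ht x hx
    rw [← DirectSum.sum_support_decompose 𝒜 x, Finset.mul_sum]
    refine Submodule.sum_mem _ fun j _ => ?_
    exact hall j _ (SetLike.coe_mem _) (hU₀𝒰.1 j hx)
      (Submodule.mul_mem_mul ht (Submodule.mem_span_singleton_self _))
  obtain ⟨e, u, hu𝒜, huU₀, hTu⟩ := hexu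
  set U' : Submodule k A := I ⊔ (Submodule.span k {u} ⊔ ⊤ * Submodule.span k {u}) with hU'
  have hspanhom : SG3Homog 𝒜 (Submodule.span k ({u} : Set A)) :=
    SG3Homog_span 𝒜 (by rintro x ⟨rfl⟩; exact ⟨e, hu𝒜⟩)
  have hMone : 1 ≤ M := by omega
  have hU'𝒰 : U' ∈ 𝒰 := by
    refine ⟨?_, ?_, le_sup_left, ?_⟩
    · exact SG3Homog_sup 𝒜 hIhom (SG3Homog_sup 𝒜 hspanhom
        (SG3Homog_mul 𝒜 (SG3Homog_top 𝒜) hspanhom))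
    · rw [hU', Submodule.mul_sup, Submodule.mul_sup]
      refine sup_le (le_trans htopI le_sup_left) (sup_le ?_ ?_)
      · exact le_sup_of_le_right le_sup_right
      · rw [← mul_assoc]
        exact le_sup_of_le_right (le_sup_of_le_right
          (mul_le_mul' le_top le_rfl))
    · intro h
      apply hTu
      refine le_trans ?_ h
      exact mul_le_mul' le_rfl (le_sup_of_le_right le_sup_left)
  have hU'le : U' ≤ U₀ := by
    refine sup_le hU₀𝒰.2.2.1 (sup_le ?_ ?_)
    · exact Submodule.span_le.2 (Set.singleton_subset_iff.2 huU₀)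
    · exact le_trans (mul_le_mul' le_rfl
        (Submodule.span_le.2 (Set.singleton_subset_iff.2 huU₀))) hU₀𝒰.2.1
  have hU'eq : U' = U₀ := hmin U' hU'𝒰 hU'le
  set U'' : Submodule k A := T * U₀ ⊔ I with hU''
  have hU''𝒰 : U'' ∈ 𝒰 := by
    refine ⟨SG3Homog_sup 𝒜 (SG3Homog_mul 𝒜 (SG3Homog_pow 𝒜 (SG3_J_homog 𝒜) M) hU₀𝒰.1) hIhom,
      ?_, le_sup_right, ?_⟩
    · rw [hU'', Submodule.mul_sup, ← mul_assoc]
      exact sup_le (le_sup_of_le_left (mul_le_mul' (SG3_top_mul_pow 𝒜 hMone) le_rfl))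
        (le_sup_of_le_right htopI)
    · intro h
      apply hU₀𝒰.2.2.2
      have h1 : T * U₀ ≤ (T * T ⊔ I) * U₀ := mul_le_mul' hTT le_rfl
      rw [Submodule.sup_mul] at h1
      have h2 : I * U₀ ≤ I := le_trans (mul_le_mul' le_rfl le_top) hItop
      have h3 : T * T * U₀ ≤ T * U'' := by
        rw [mul_assoc]
        exact mul_le_mul' le_rfl le_sup_left
      exact le_trans h1 (sup_le (le_trans h3 h) h2)
  have hU''le : U'' ≤ U₀ :=
    sup_le (le_trans (mul_le_mul' le_top le_rfl) hU₀𝒰.2.1) hU₀𝒰.2.2.1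
  have hU''eq : U'' = U₀ := hmin U'' hU''𝒰 hU''le
  have hJspan : T * U₀ ≤ I ⊔ Jk * Submodule.span k {u} := by
    have hTU₀ : T * U₀ = T * I ⊔ (T * Submodule.span k {u} ⊔ T * (⊤ * Submodule.span k {u})) := by
      rw [← hU'eq, hU', Submodule.mul_sup, Submodule.mul_sup]
    rw [hTU₀]
    refine sup_le ?_ (sup_le ?_ ?_)
    · exact le_sup_of_le_left (le_trans (mul_le_mul' (le_top : T ≤ ⊤) (le_rfl : I ≤ I)) htopI)
    · exact le_sup_of_le_right (mul_le_mul' (SG3_pow_le_J 𝒜 hMone) le_rfl)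
    · rw [← mul_assoc]
      exact le_sup_of_le_right (mul_le_mul'
        (le_trans (SG3_pow_mul_top 𝒜 hMone) (SG3_pow_le_J 𝒜 hMone)) le_rfl)
  have huTU : u ∈ I ⊔ Jk * Submodule.span k {u} := by
    have h0 : u ∈ T * U₀ ⊔ I := by rw [← hU''eq] at huU₀; exact huU₀
    exact (sup_le hJspan le_sup_left) h0
  have hexq : ∃ y ∈ I, ∃ q ∈ Jk, u = y + q * u := by
    obtain ⟨y, hy, w, hw, huyw⟩ := Submodule.mem_sup.1 huTU
    have hle : Jk * Submodule.span k {u} ≤ Submodule.map (LinearMap.mulRight k u) Jk := by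
      rw [Submodule.mul_le]
      intro m hm n hn
      obtain ⟨c, rfl⟩ := Submodule.mem_span_singleton.1 hn
      refine ⟨c • m, Submodule.smul_mem _ c hm, ?_⟩
      rw [LinearMap.mulRight_apply, smul_mul_assoc, mul_smul_comm]
    obtain ⟨q, hq, hqu⟩ := hle hw
    rw [LinearMap.mulRight_apply] at hqu
    exact ⟨y, hy, q, hq, by rw [hqu]; exact huyw.symm⟩
  obtain ⟨y, hy, q, hq, huq⟩ := hexq
  set q₀ : A := (DirectSum.decompose 𝒜 q 0 : A) with hq₀
  have hq0J : q₀ ∈ Jk := SG3_J_homog 𝒜 0 hq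
  have hq0𝒜 : q₀ ∈ 𝒜 0 := SetLike.coe_mem _
  have hcomp : u = (DirectSum.decompose 𝒜 y e : A) + q₀ * u := by
    have h1 := congrArg (fun z => (DirectSum.decompose 𝒜 z e : A)) huq
    dsimp only at h1
    rw [DirectSum.decompose_of_mem_same 𝒜 hu𝒜, DirectSum.decompose_add,
      DirectSum.add_apply] at h1
    push_cast at h1
    have h2 : q₀ * u = (DirectSum.decompose 𝒜 (q * u) (0 + e) : A) :=
      SG3_comp_mul_right 𝒜 q hu𝒜 0
    rw [zero_add] at h2
    rw [h2]
    exact h1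
  obtain ⟨x, hx⟩ := SG3_quasi_reg 𝒜 hq0J hq0𝒜
  have huI : u ∈ I := by
    have h1 : (1 - q₀) * u = (DirectSum.decompose 𝒜 y e : A) := by
      rw [sub_mul, one_mul]
      exact sub_eq_iff_eq_add.2 hcomp
    have h2 : u = x * (DirectSum.decompose 𝒜 y e : A) := by
      calc u = 1 * u := (one_mul u).symm
        _ = (x * (1 - q₀)) * u := by rw [hx]
        _ = x * ((1 - q₀) * u) := by rw [mul_assoc]
        _ = x * (DirectSum.decompose 𝒜 y e : A) := by rw [h1]
    rw [h2]
    have h3 : (DirectSum.decompose 𝒜 y e : A) ∈ I := hIhom e hy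
    exact htopI (Submodule.mul_mem_mul trivial h3)
  have hU₀I : U₀ ≤ I := by
    rw [← hU'eq, hU']
    refine sup_le le_rfl (sup_le ?_ ?_)
    · exact Submodule.span_le.2 (Set.singleton_subset_iff.2 huI)
    · exact le_trans (mul_le_mul' le_rfl
        (Submodule.span_le.2 (Set.singleton_subset_iff.2 huI))) htopI
  exact hU₀𝒰.2.2.2 (le_trans (mul_le_mul' le_top hU₀I) htopI)

end SG3aux

theorem stmt_3 (𝒜 : ℤ → Submodule k A) [GradedRing 𝒜]
    (hA : CommonlyGraded k A 𝒜) :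
    (∀ i : ℤ, 0 < i → ∃ n : ℕ, grJacobsonK k A 𝒜 ^ n ≤ AgeSub k A 𝒜 i) ∧
    (⨅ n : ℕ, grJacobsonK k A 𝒜 ^ n) = ⊥ := by
  obtain ⟨hfin, b, hb⟩ := hA
  have part1 : ∀ i : ℤ, 0 < i → ∃ n : ℕ, grJacobsonK k A 𝒜 ^ n ≤ AgeSub k A 𝒜 i :=
    fun i hi => SG3_engine 𝒜 hfin hb hi
  refine ⟨part1, ?_⟩
  rw [eq_bot_iff]
  intro x hx
  rw [Submodule.mem_bot]
  refine SG3_age_inf_eq_zero 𝒜 fun i hi => ?_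
  obtain ⟨n, hn⟩ := part1 i hi
  exact hn (Submodule.mem_iInf _ |>.1 hx n)
end

section
/- Let A be a commonly graded algebra finitely generated as a k-algebra, with graded Jacobson radical J, and let M be a finitely generated graded A-module. Then {M_{≥n}}_n and {J^n M}_n are cofinal: for every n there is m with J^m M ⊆ M_{≥ n}, and for every n there is m with M_{≥ m} ⊆ J^n M. -/
open DirectSum

variable (k : Type) [Field k] (A : Type) [Ring A] [Algebra k A]

/-- `M_{≥ n}` for a graded module with grading `ℳ`. -/
def MgeSub {M : Type} [AddCommGroup M] [Module k M] (ℳ : ℤ → Submodule k M) (n : ℤ) :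
    Submodule k M :=
  ⨆ j : ℤ, ⨆ _ : n ≤ j, ℳ j

/-- `Jⁿ M`, the submodule generated by products of `n` elements of `J` acting on `M`. -/
noncomputable def JpowSMul (𝒜 : ℤ → Submodule k A) [GradedRing 𝒜]
    {M : Type} [AddCommGroup M] [Module k M] [Module A M] (n : ℕ) : Submodule A M :=
  Submodule.span A {x : M | ∃ a ∈ (grJacobsonK k A 𝒜 ^ n : Submodule k A), ∃ y : M, x = a • y}


section Aux

variable {k A}
variable (𝒜 : ℤ → Submodule k A) [GradedRing 𝒜]

/-- degree-`i` projection as a `k`-linear map -/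
noncomputable def pA (i : ℤ) : A →ₗ[k] A where
  toFun a := (DirectSum.decompose 𝒜 a i : A)
  map_add' x y := by
    show (((decompose 𝒜) (x + y) : ⨁ i, 𝒜 i) _ : A) = _
    rw [DirectSum.decompose_add, DirectSum.add_apply, Submodule.coe_add]
  map_smul' c x := by
    show (((decompose 𝒜) (c • x) : ⨁ i, 𝒜 i) _ : A) = _
    rw [DirectSum.decompose_smul, DirectSum.smul_apply, SetLike.val_smul, RingHom.id_apply]

@[simp] theorem pA_apply (i : ℤ) (a : A) : pA 𝒜 i a = (DirectSum.decompose 𝒜 a i : A) := rfl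

theorem hg (c : A) {v : A} {e : ℤ} (hv : v ∈ 𝒜 e) (q : ℤ) :
    (DirectSum.decompose 𝒜 (c * v) q : A) = (DirectSum.decompose 𝒜 c (q - e) : A) * v := by
  induction c using DirectSum.Decomposition.inductionOn 𝒜 with
  | zero =>
    rw [zero_mul, DirectSum.decompose_zero, DirectSum.zero_apply, DirectSum.zero_apply,
      ZeroMemClass.coe_zero, ZeroMemClass.coe_zero, zero_mul]
  | @homogeneous i m =>
    by_cases hq : q = i + e
    · subst hq
      rw [DirectSum.decompose_of_mem_same 𝒜 (SetLike.mul_mem_graded m.2 hv)]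
      rw [show i + e - e = i by ring, DirectSum.decompose_of_mem_same 𝒜 m.2]
    · rw [DirectSum.decompose_of_mem_ne 𝒜 (SetLike.mul_mem_graded m.2 hv) (fun h => hq h.symm)]
      rw [DirectSum.decompose_of_mem_ne 𝒜 m.2 (show i ≠ q - e by omega), zero_mul]
  | add c₁ c₂ h₁ h₂ =>
    rw [add_mul]
    have := map_add (pA 𝒜 q) (c₁ * v) (c₂ * v)
    simp only [pA_apply] at this
    rw [this, h₁, h₂]
    have := map_add (pA 𝒜 (q - e)) c₁ c₂
    simp only [pA_apply] at this
    rw [this, add_mul]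

/-- graded left ideal, as a `k`-submodule -/
def GLIdeal (K : Submodule k A) : Prop :=
  (∀ (c : A), ∀ a ∈ K, c * a ∈ K) ∧ (∀ a ∈ K, ∀ q : ℤ, (DirectSum.decompose 𝒜 a q : A) ∈ K)

theorem gli_J : GLIdeal 𝒜 (grJacobsonK k A 𝒜) := by
  constructor
  · intro c a ha
    have : c • a ∈ grJacobson k A 𝒜 := Submodule.smul_mem _ c ha
    exact this
  · intro a ha q
    have ha' : a ∈ grJacobson k A 𝒜 := ha
    rw [grJacobson, Submodule.mem_sInf] at ha'
    show (DirectSum.decompose 𝒜 a q : A) ∈ grJacobson k A 𝒜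
    rw [grJacobson, Submodule.mem_sInf]
    intro L hL
    exact hL.1 q (ha' L hL)

theorem gli_sup {K K' : Submodule k A} (h : GLIdeal 𝒜 K) (h' : GLIdeal 𝒜 K') :
    GLIdeal 𝒜 (K ⊔ K') := by
  constructor
  · intro c a ha
    obtain ⟨x, hx, y, hy, rfl⟩ := Submodule.mem_sup.mp ha
    rw [mul_add]
    exact Submodule.add_mem _ (Submodule.mem_sup_left (h.1 c x hx))
      (Submodule.mem_sup_right (h'.1 c y hy))
  · intro a ha q
    obtain ⟨x, hx, y, hy, rfl⟩ := Submodule.mem_sup.mp ha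
    have := map_add (pA 𝒜 q) x y
    simp only [pA_apply] at this
    rw [this]
    exact Submodule.add_mem _ (Submodule.mem_sup_left (h.2 x hx q))
      (Submodule.mem_sup_right (h'.2 y hy q))

theorem gli_Jpow (n : ℕ) (hn : 1 ≤ n) : GLIdeal 𝒜 (grJacobsonK k A 𝒜 ^ n) := by
  induction n, hn using Nat.le_induction with
  | base => rw [pow_one]; exact gli_J 𝒜
  | succ n hn ih =>
    rw [pow_succ']
    constructor
    · intro c a ha
      refine Submodule.mul_induction_on (C := fun x => c * x ∈ _) ha ?_ ?_
      · intro m hm n' hn'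
        rw [← mul_assoc]
        exact Submodule.mul_mem_mul ((gli_J 𝒜).1 c m hm) hn'
      · intro x y hx hy
        rw [mul_add]; exact Submodule.add_mem _ hx hy
    · intro a ha q
      revert q
      refine Submodule.mul_induction_on
        (C := fun x => ∀ q : ℤ, (DirectSum.decompose 𝒜 x q : A) ∈ _) ha ?_ ?_
      · intro m hm b hb q
        classical
        have hb' : ∀ e : ℤ, (DirectSum.decompose 𝒜 b e : A) ∈ grJacobsonK k A 𝒜 ^ n :=
          fun e => ih.2 b hb e
        have hsum : m * b = ∑ e ∈ (DirectSum.decompose 𝒜 b).support,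
            m * (DirectSum.decompose 𝒜 b e : A) := by
          rw [← Finset.mul_sum, DirectSum.sum_support_decompose]
        rw [hsum]
        have := map_sum (pA 𝒜 q) (fun e => m * (DirectSum.decompose 𝒜 b e : A))
          ((DirectSum.decompose 𝒜 b).support)
        simp only [pA_apply] at this
        rw [this]
        refine Submodule.sum_mem _ (fun e he => ?_)
        rw [hg 𝒜 m (SetLike.coe_mem _) q]
        exact Submodule.mul_mem_mul ((gli_J 𝒜).2 m hm (q - e)) (hb' e)
      · intro x y hx hy q
        have := map_add (pA 𝒜 q) x y
        simp only [pA_apply] at this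
        rw [this]
        exact Submodule.add_mem _ (hx q) (hy q)

theorem highJ {b : ℤ} (hb : ∀ i < b, 𝒜 i = ⊥) {a : A} {e : ℤ}
    (ha : a ∈ 𝒜 e) (he : 1 - b ≤ e) : a ∈ grJacobson k A 𝒜 := by
  rw [grJacobson, Submodule.mem_sInf]
  intro L hL
  by_contra haL
  set X : Ideal A := L ⊔ Ideal.span {a} with hX
  have haX : a ∈ X := Submodule.mem_sup_right (Submodule.subset_span rfl)
  have hXhom : Ideal.IsHomogeneous 𝒜 X := by
    intro q r hr
    obtain ⟨l, hl, y, hy, rfl⟩ := Submodule.mem_sup.mp hr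
    obtain ⟨c, rfl⟩ := Submodule.mem_span_singleton.mp hy
    have hadd := map_add (pA 𝒜 q) l (c • a)
    simp only [pA_apply] at hadd
    rw [hadd]
    have : (DirectSum.decompose 𝒜 (c • a) q : A) = (DirectSum.decompose 𝒜 c (q - e) : A) * a := by
      rw [smul_eq_mul]; exact hg 𝒜 c ha q
    rw [this]
    refine Submodule.add_mem _ (Submodule.mem_sup_left (hL.1 q hl)) (Submodule.mem_sup_right ?_)
    rw [← smul_eq_mul]
    exact Submodule.smul_mem _ _ (Submodule.subset_span rfl)
  have hXT : X = ⊤ := by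
    by_contra hXT
    have := hL.2.2 X hXhom hXT le_sup_left
    rw [this] at haX
    exact haL haX
  have h1 : (1 : A) ∈ X := hXT ▸ Submodule.mem_top
  obtain ⟨l, hl, y, hy, hsum⟩ := Submodule.mem_sup.mp h1
  obtain ⟨c, rfl⟩ := Submodule.mem_span_singleton.mp hy
  have h0 : (1 : A) = (DirectSum.decompose 𝒜 l 0 : A) +
      (DirectSum.decompose 𝒜 c (0 - e) : A) * a := by
    conv_lhs => rw [← DirectSum.decompose_of_mem_same 𝒜 (SetLike.one_mem_graded 𝒜), ← hsum]
    have hadd := map_add (pA 𝒜 0) l (c • a)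
    simp only [pA_apply] at hadd
    rw [hadd]
    congr 1
    rw [smul_eq_mul]
    exact hg 𝒜 c ha 0
  have hc0 : (DirectSum.decompose 𝒜 c (0 - e) : A) = 0 := by
    have hmem := SetLike.coe_mem (DirectSum.decompose 𝒜 c (0 - e))
    have hle : 𝒜 (0 - e) ≤ ⊥ := le_of_eq (hb (0 - e) (by omega))
    exact (Submodule.mem_bot k).mp (hle hmem)
  rw [hc0, zero_mul, add_zero] at h0
  exact hL.2.1 ((Ideal.eq_top_iff_one L).mpr (h0 ▸ hL.1 0 hl))

/-- turn a left-stable `k`-submodule into a left ideal -/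
def toIdealA (L : Submodule k A) (hL : ∀ (c : A), ∀ a ∈ L, c * a ∈ L) : Ideal A where
  carrier := L
  add_mem' := fun ha hb => L.add_mem ha hb
  zero_mem' := L.zero_mem
  smul_mem' := fun c a ha => by simpa [smul_eq_mul] using hL c a ha

theorem mem_toIdealA {L : Submodule k A} {hL} {a : A} : a ∈ toIdealA L hL ↔ a ∈ L := Iff.rfl

theorem qn {K L : Submodule k A} (hK : GLIdeal 𝒜 K) (hL : GLIdeal 𝒜 L)
    (hLK : L ≤ K)
    (hdich : ∀ X : Submodule k A, GLIdeal 𝒜 X → L ≤ X → X ≤ K → X = L ∨ X = K)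
    {x : A} {e : ℤ} (hx : x ∈ 𝒜 e) (hxK : x ∈ K) (hxL : x ∉ L) :
    ∀ j ∈ grJacobsonK k A 𝒜, j * x ∈ L := by
  classical
  set Lx : Submodule k A := Submodule.comap (LinearMap.mulRight k x) L with hLxdef
  have hmemLx : ∀ a : A, a ∈ Lx ↔ a * x ∈ L := by
    intro a
    rw [hLxdef, Submodule.mem_comap, LinearMap.mulRight_apply]
  have hLxstab : ∀ (c : A), ∀ a ∈ Lx, c * a ∈ Lx := by
    intro c a ha
    rw [hmemLx] at ha ⊢
    rw [mul_assoc]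
    exact hL.1 c _ ha
  set LxI : Ideal A := toIdealA Lx hLxstab with hLxI
  have hmemLxI : ∀ a : A, a ∈ LxI ↔ a * x ∈ L := fun a => hmemLx a
  have hmax : IsMaxGradedLeftIdeal k A 𝒜 LxI := by
    refine ⟨?_, ?_, ?_⟩
    · -- homogeneous
      intro q r hr
      rw [hmemLxI] at hr ⊢
      have hgg := hg 𝒜 r hx (q + e)
      rw [show q + e - e = q by ring] at hgg
      rw [← hgg]
      exact hL.2 _ hr (q + e)
    · -- proper
      intro hT
      have h1 : (1 : A) ∈ LxI := hT ▸ Submodule.mem_top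
      rw [hmemLxI, one_mul] at h1
      exact hxL h1
    · -- maximal
      intro I hIhom hIT hle
      refine le_antisymm ?_ hle
      have key : ∀ a ∈ I, ∀ p : ℤ, (DirectSum.decompose 𝒜 a p : A) * x ∈ L := by
        intro a haI p
        by_contra hax
        have ha'I : (DirectSum.decompose 𝒜 a p : A) ∈ I := hIhom p haI
        set X : Submodule k A :=
          L ⊔ Submodule.map (LinearMap.mulRight k x) (Submodule.restrictScalars k I) with hXdef
        have hmemX : ∀ y : A, y ∈ X ↔ ∃ l ∈ L, ∃ c ∈ I, l + c * x = y := by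
          intro y
          rw [hXdef, Submodule.mem_sup]
          constructor
          · rintro ⟨l, hl, z, hz, rfl⟩
            obtain ⟨c, hc, rfl⟩ := Submodule.mem_map.mp hz
            exact ⟨l, hl, c, hc, rfl⟩
          · rintro ⟨l, hl, c, hc, rfl⟩
            exact ⟨l, hl, c * x, Submodule.mem_map.mpr ⟨c, hc, rfl⟩, rfl⟩
        have hXgli : GLIdeal 𝒜 X := by
          constructor
          · intro c' y hy
            rw [hmemX] at hy ⊢
            obtain ⟨l, hl, c, hc, rfl⟩ := hy
            exact ⟨c' * l, hL.1 c' l hl, c' * c, Ideal.mul_mem_left I c' hc, by rw [mul_add, mul_assoc]⟩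
          · intro y hy q
            rw [hmemX] at hy
            obtain ⟨l, hl, c, hc, rfl⟩ := hy
            rw [hmemX]
            have hadd := map_add (pA 𝒜 q) l (c * x)
            simp only [pA_apply] at hadd
            rw [hadd, hg 𝒜 c hx q]
            exact ⟨_, hL.2 l hl q, _, hIhom (q - e) hc, rfl⟩
        have hLX : L ≤ X := le_sup_left
        have hXK : X ≤ K := by
          intro y hy
          rw [hmemX] at hy
          obtain ⟨l, hl, c, hc, rfl⟩ := hy
          exact K.add_mem (hLK hl) (hK.1 c x hxK)
        have hXL : X ≠ L := by
          intro hXL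
          apply hax
          apply hXL ▸ ((hmemX _).mpr ⟨0, L.zero_mem, _, ha'I, by rw [zero_add]⟩)
        have hXeq : X = K := (hdich X hXgli hLX hXK).resolve_left hXL
        have hxX : x ∈ X := hXeq ▸ hxK
        rw [hmemX] at hxX
        obtain ⟨l, hl, c, hc, hsum⟩ := hxX
        have hxe : x = (DirectSum.decompose 𝒜 l e : A) +
            (DirectSum.decompose 𝒜 c 0 : A) * x := by
          conv_lhs => rw [← DirectSum.decompose_of_mem_same 𝒜 hx, ← hsum]
          have hadd := map_add (pA 𝒜 e) l (c * x)
          simp only [pA_apply] at hadd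
          rw [hadd]
          congr 1
          have := hg 𝒜 c hx e
          rw [show e - e = 0 by ring] at this
          exact this
        set c₀ : A := (DirectSum.decompose 𝒜 c 0 : A) with hc₀
        have hc₀I : c₀ ∈ I := hIhom 0 hc
        have hsub : (1 - c₀) * x ∈ L := by
          have : (1 - c₀) * x = (DirectSum.decompose 𝒜 l e : A) := by
            rw [sub_mul, one_mul]
            exact sub_eq_of_eq_add hxe
          rw [this]
          exact hL.2 l hl e
        have h1I : (1 : A) ∈ I := by
          have : (1 - c₀) ∈ I := hle ((hmemLxI _).mpr hsub)
          have := I.add_mem this hc₀I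
          simpa using this
        exact hIT ((Ideal.eq_top_iff_one I).mpr h1I)
      intro r hr
      rw [hmemLxI]
      have hrx : r * x = ∑ p ∈ (DirectSum.decompose 𝒜 r).support,
          (DirectSum.decompose 𝒜 r p : A) * x := by
        rw [← Finset.sum_mul, DirectSum.sum_support_decompose]
      rw [hrx]
      exact Submodule.sum_mem _ (fun p _ => key r hr p)
  intro j hj
  have hjL : j ∈ LxI := by
    have : grJacobson k A 𝒜 ≤ LxI := sInf_le hmax
    exact this hj
  exact (hmemLxI j).mp hjL

/-- the left ideal generated by elements of degree `≥ n` -/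
def In (n : ℤ) : Submodule k A :=
  Submodule.span k {x : A | ∃ (c s : A) (i : ℤ), n ≤ i ∧ s ∈ 𝒜 i ∧ x = c * s}

theorem mem_In_of_high {n i : ℤ} {a : A} (ha : a ∈ 𝒜 i) (hi : n ≤ i) : a ∈ In 𝒜 n :=
  Submodule.subset_span ⟨1, a, i, hi, ha, (one_mul a).symm⟩

theorem gli_In (n : ℤ) : GLIdeal 𝒜 (In 𝒜 n) := by
  constructor
  · intro c a ha
    induction ha using Submodule.span_induction with
    | mem x hx =>
      obtain ⟨c', s', i, hi, hs, rfl⟩ := hx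
      exact Submodule.subset_span ⟨c * c', s', i, hi, hs, (mul_assoc c c' s').symm⟩
    | zero => rw [mul_zero]; exact Submodule.zero_mem _
    | add x y hx hy ihx ihy => rw [mul_add]; exact Submodule.add_mem _ ihx ihy
    | smul t x hx ihx => rw [mul_smul_comm]; exact Submodule.smul_mem _ t ihx
  · intro a ha q
    induction ha using Submodule.span_induction with
    | mem x hx =>
      obtain ⟨c', s', i, hi, hs, rfl⟩ := hx
      rw [hg 𝒜 c' hs q]
      exact Submodule.subset_span ⟨_, s', i, hi, hs, rfl⟩
    | zero =>
      have := map_zero (pA 𝒜 q)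
      simp only [pA_apply] at this
      rw [this]; exact Submodule.zero_mem _
    | add x y hx hy ihx ihy =>
      have := map_add (pA 𝒜 q) x y
      simp only [pA_apply] at this
      rw [this]; exact Submodule.add_mem _ ihx ihy
    | smul t x hx ihx =>
      have := map_smul (pA 𝒜 q) t x
      simp only [pA_apply] at this
      rw [this]; exact Submodule.smul_mem _ t ihx

theorem gap_lemma {n : ℤ} {U : Submodule k A} (hU : ∀ q : ℤ, q < n → 𝒜 q ≤ U)
    {X : Submodule k A} (hX : GLIdeal 𝒜 X) : X ≤ In 𝒜 n ⊔ (X ⊓ U) := by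
  classical
  intro a ha
  rw [← DirectSum.sum_support_decompose 𝒜 a]
  refine Submodule.sum_mem _ (fun q _ => ?_)
  by_cases hq : n ≤ q
  · exact Submodule.mem_sup_left (mem_In_of_high 𝒜 (SetLike.coe_mem _) hq)
  · exact Submodule.mem_sup_right ⟨hX.2 a ha q, hU q (by omega) (SetLike.coe_mem _)⟩

theorem infU_lt {n : ℤ} {U : Submodule k A} [FiniteDimensional k U]
    (hU : ∀ q : ℤ, q < n → 𝒜 q ≤ U)
    {P Q : Submodule k A} (hQ : GLIdeal 𝒜 Q) (hInP : In 𝒜 n ≤ P)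
    (hPQ : P ≤ Q) (hne : P ≠ Q) :
    Module.finrank k ↥(P ⊓ U) < Module.finrank k ↥(Q ⊓ U) := by
  haveI : FiniteDimensional k ↥(Q ⊓ U) := Submodule.finiteDimensional_of_le inf_le_right
  refine Submodule.finrank_lt_finrank_of_lt (lt_of_le_of_ne (inf_le_inf_right U hPQ) ?_)
  intro heq
  apply hne
  refine le_antisymm hPQ ?_
  calc Q ≤ In 𝒜 n ⊔ (Q ⊓ U) := gap_lemma 𝒜 hU hQ
    _ = In 𝒜 n ⊔ (P ⊓ U) := by rw [heq]
    _ ≤ P := sup_le hInP (le_trans inf_le_left (le_refl P))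

theorem nakayama_step {n : ℤ} {U : Submodule k A} [FiniteDimensional k U]
    (hU : ∀ q : ℤ, q < n → 𝒜 q ≤ U)
    {K : Submodule k A} (hK : GLIdeal 𝒜 K) (hIK : In 𝒜 n ≤ K) (hne : K ≠ In 𝒜 n) :
    ∃ L : Submodule k A, GLIdeal 𝒜 L ∧ In 𝒜 n ≤ L ∧ L ≤ K ∧
      (∀ j ∈ grJacobsonK k A 𝒜, ∀ y ∈ K, j * y ∈ L) ∧
      Module.finrank k ↥(L ⊓ U) < Module.finrank k ↥(K ⊓ U) := by
  classical
  set 𝒮 : Set (Submodule k A) := {L | GLIdeal 𝒜 L ∧ In 𝒜 n ≤ L ∧ L ≤ K ∧ L ≠ K} with h𝒮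
  have hIn𝒮 : In 𝒜 n ∈ 𝒮 := ⟨gli_In 𝒜 n, le_refl _, hIK, Ne.symm hne⟩
  set μ : Submodule k A → ℕ := fun L => Module.finrank k ↥(L ⊓ U) with hμ
  have hbdd : BddAbove (μ '' 𝒮) := by
    refine ⟨Module.finrank k U, ?_⟩
    rintro m ⟨L, _, rfl⟩
    exact Submodule.finrank_mono inf_le_right
  have hne' : (μ '' 𝒮).Nonempty := ⟨μ (In 𝒜 n), ⟨In 𝒜 n, hIn𝒮, rfl⟩⟩
  obtain ⟨L, hL𝒮, hμL⟩ : ∃ L ∈ 𝒮, μ L = sSup (μ '' 𝒮) := by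
    have := Nat.sSup_mem hne' hbdd
    obtain ⟨L, hL, hμ⟩ := this
    exact ⟨L, hL, hμ⟩
  have hmaxμ : ∀ L' ∈ 𝒮, μ L' ≤ μ L := by
    intro L' hL'
    rw [hμL]
    exact le_csSup hbdd ⟨L', hL', rfl⟩
  have hdich : ∀ X : Submodule k A, GLIdeal 𝒜 X → L ≤ X → X ≤ K → X = L ∨ X = K := by
    intro X hXgli hLX hXK
    by_cases hXK' : X = K
    · exact Or.inr hXK'
    · left
      by_contra hXL
      have hX𝒮 : X ∈ 𝒮 := ⟨hXgli, le_trans hL𝒮.2.1 hLX, hXK, hXK'⟩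
      have := infU_lt 𝒜 hU hXgli hL𝒮.2.1 hLX (fun h => hXL h.symm)
      exact absurd (hmaxμ X hX𝒮) (by simpa [hμ] using not_le_of_gt this)
  refine ⟨L, hL𝒮.1, hL𝒮.2.1, hL𝒮.2.2.1, ?_, ?_⟩
  · intro j hj y hy
    have hjy : j * y = ∑ q ∈ (DirectSum.decompose 𝒜 y).support,
        j * (DirectSum.decompose 𝒜 y q : A) := by
      rw [← Finset.mul_sum, DirectSum.sum_support_decompose]
    rw [hjy]
    refine Submodule.sum_mem _ (fun q _ => ?_)
    by_cases hyL : (DirectSum.decompose 𝒜 y q : A) ∈ L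
    · exact hL𝒮.1.1 j _ hyL
    · exact qn 𝒜 hK hL𝒮.1 hL𝒮.2.2.1 hdich (SetLike.coe_mem _) (hK.2 y hy q) hyL j hj
  · exact infU_lt 𝒜 hU hK hL𝒮.2.1 hL𝒮.2.2.1 hL𝒮.2.2.2

theorem ring_lemma_A {b : ℤ} (hb : ∀ i < b, 𝒜 i = ⊥)
    (hfin : ∀ i : ℤ, FiniteDimensional k (𝒜 i)) (n : ℤ) :
    ∃ m : ℕ, 1 ≤ m ∧ (grJacobsonK k A 𝒜) ^ m ≤ In 𝒜 n := by
  classical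
  haveI := hfin
  set U : Submodule k A := (Finset.Icc b (n - 1)).sup 𝒜 with hUdef
  haveI : FiniteDimensional k U := Submodule.finiteDimensional_finset_sup _ _
  have hU : ∀ q : ℤ, q < n → 𝒜 q ≤ U := by
    intro q hq
    by_cases hqb : b ≤ q
    · exact Finset.le_sup (Finset.mem_Icc.mpr ⟨hqb, by omega⟩)
    · rw [hb q (by omega)]; exact bot_le
  set g : ℕ → Submodule k A := fun t => In 𝒜 n ⊔ (grJacobsonK k A 𝒜) ^ t with hgdef
  have hgli : ∀ t : ℕ, 1 ≤ t → GLIdeal 𝒜 (g t) :=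
    fun t ht => gli_sup 𝒜 (gli_In 𝒜 n) (gli_Jpow 𝒜 t ht)
  have hgIn : ∀ t : ℕ, In 𝒜 n ≤ g t := fun t => le_sup_left
  have hstep : ∀ t : ℕ, 1 ≤ t → g t ≠ In 𝒜 n →
      Module.finrank k ↥(g (t + 1) ⊓ U) < Module.finrank k ↥(g t ⊓ U) := by
    intro t ht hne
    obtain ⟨L, hLgli, hInL, hLK, hJK, hlt⟩ :=
      nakayama_step 𝒜 hU (hgli t ht) (hgIn t) hne
    have hg1 : g (t + 1) ≤ L := by
      refine sup_le hInL ?_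
      rw [pow_succ']
      intro z hz
      refine Submodule.mul_induction_on hz ?_ (fun x y hx hy => L.add_mem hx hy)
      intro j hj y hy
      exact hJK j hj y (Submodule.mem_sup_right hy)
    haveI : FiniteDimensional k ↥(L ⊓ U) := Submodule.finiteDimensional_of_le inf_le_right
    have : Module.finrank k ↥(g (t + 1) ⊓ U) ≤ Module.finrank k ↥(L ⊓ U) :=
      Submodule.finrank_mono (inf_le_inf_right U hg1)
    omega
  have hterm : ∃ t : ℕ, 1 ≤ t ∧ g t = In 𝒜 n := by
    by_contra hcon
    push_neg at hcon
    have hdesc : ∀ i : ℕ, Module.finrank k ↥(g (1 + i) ⊓ U) + i ≤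
        Module.finrank k ↥(g 1 ⊓ U) := by
      intro i
      induction i with
      | zero => simp
      | succ i ih =>
        have := hstep (1 + i) (by omega) (hcon (1 + i) (by omega))
        have heq : 1 + (i + 1) = (1 + i) + 1 := by omega
        rw [heq]
        omega
    have := hdesc (Module.finrank k ↥(g 1 ⊓ U) + 1)
    omega
  obtain ⟨t, ht, hgt⟩ := hterm
  exact ⟨t, ht, le_trans le_sup_right (le_of_eq hgt)⟩

theorem cross_lemma {d N : ℤ} (hd : 1 ≤ d) :
    ∀ (l : List (A × ℤ)), (∀ p ∈ l, p.2 ≤ d) → ∀ s : ℤ, s < N →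
      N ≤ s + (l.map Prod.snd).sum →
      ∃ l₁ l₂ : List (A × ℤ), l = l₁ ++ l₂ ∧ N ≤ s + (l₁.map Prod.snd).sum ∧
        s + (l₁.map Prod.snd).sum < N + d := by
  intro l
  induction l with
  | nil =>
    intro _ s hs hsum
    simp only [List.map_nil, List.sum_nil, add_zero] at hsum
    omega
  | cons p rest ih =>
    intro hdeg s hs hsum
    by_cases hp : N ≤ s + p.2
    · refine ⟨[p], rest, rfl, ?_, ?_⟩
      · simpa using hp
      · have := hdeg p List.mem_cons_self
        simp only [List.map_cons, List.map_nil, List.sum_cons, List.sum_nil, add_zero]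
        omega
    · simp only [List.map_cons, List.sum_cons] at hsum
      obtain ⟨l₁, l₂, heq, h1, h2⟩ :=
        ih (fun q hq => hdeg q (List.mem_cons_of_mem _ hq)) (s + p.2) (by omega) (by omega)
      refine ⟨p :: l₁, l₂, by rw [heq, List.cons_append], ?_, ?_⟩ <;>
        · simp only [List.map_cons, List.sum_cons]
          omega

theorem lc {b : ℤ} (hb : ∀ i < b, 𝒜 i = ⊥) {d N : ℤ} (hd : 1 ≤ d) (hNb : 1 - b ≤ N)
    (hN1 : 1 ≤ N) :
    ∀ n : ℕ, 1 ≤ n → ∀ l : List (A × ℤ), (∀ p ∈ l, p.1 ∈ 𝒜 p.2 ∧ p.2 ≤ d) →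
      (n : ℤ) * (N + d) ≤ (l.map Prod.snd).sum →
      (l.map Prod.fst).prod ∈ grJacobsonK k A 𝒜 ^ n := by
  intro n hn
  induction n, hn using Nat.le_induction with
  | base =>
    intro l hl hsum
    rw [pow_one]
    have hprod : (l.map Prod.fst).prod ∈ 𝒜 ((l.map Prod.snd).sum) :=
      SetLike.list_prod_map_mem_graded l Prod.snd Prod.fst (fun p hp => (hl p hp).1)
    have : (1 : ℤ) * (N + d) = N + d := one_mul _
    exact highJ 𝒜 hb hprod (by push_cast at hsum; omega)
  | succ n hn ih =>
    intro l hl hsum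
    have hNle : N ≤ 0 + (l.map Prod.snd).sum := by
      have h2 : (2 : ℤ) ≤ (n : ℤ) + 1 := by exact_mod_cast Nat.succ_le_succ hn
      have : (2 : ℤ) * (N + d) ≤ ((n : ℤ) + 1) * (N + d) := by nlinarith
      push_cast at hsum
      omega
    obtain ⟨l₁, l₂, heq, h1, h2⟩ :=
      cross_lemma (A := A) hd l (fun p hp => (hl p hp).2) 0 (by omega) hNle
    subst heq
    rw [List.map_append, List.prod_append, pow_succ']
    have hsplit : (List.map Prod.snd (l₁ ++ l₂)).sum =
        (l₁.map Prod.snd).sum + (l₂.map Prod.snd).sum := by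
      rw [List.map_append, List.sum_append]
    refine Submodule.mul_mem_mul ?_ ?_
    · have hprod : (l₁.map Prod.fst).prod ∈ 𝒜 ((l₁.map Prod.snd).sum) :=
        SetLike.list_prod_map_mem_graded l₁ Prod.snd Prod.fst
          (fun p hp => (hl p (List.mem_append_left _ hp)).1)
      exact highJ 𝒜 hb hprod (by omega)
    · refine ih l₂ (fun p hp => hl p (List.mem_append_right _ hp)) ?_
      rw [hsplit] at hsum
      push_cast at hsum ⊢
      nlinarith

theorem homog_high {b : ℤ} (hb : ∀ i < b, 𝒜 i = ⊥) {s : Finset A}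
    (hs : Algebra.adjoin k (s : Set A) = ⊤) {d : ℤ} (hd : 1 ≤ d)
    (hdb : ∀ a ∈ s, ∀ i : ℤ, d < i → (DirectSum.decompose 𝒜 a i : A) = 0)
    {N : ℤ} (hNb : 1 - b ≤ N) (hN1 : 1 ≤ N) :
    ∀ n : ℕ, 1 ≤ n → ∀ {a : A} {e : ℤ}, a ∈ 𝒜 e → (n : ℤ) * (N + d) ≤ e →
      a ∈ grJacobsonK k A 𝒜 ^ n := by
  classical
  set T : Set A := {x | ∃ a ∈ (s : Set A), ∃ i : ℤ, i ≤ d ∧ (DirectSum.decompose 𝒜 a i : A) = x}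
    with hTdef
  have hTtop : Algebra.adjoin k T = ⊤ := by
    rw [eq_top_iff, ← hs]
    refine Algebra.adjoin_le ?_
    intro a ha
    show a ∈ Algebra.adjoin k T
    rw [← DirectSum.sum_support_decompose 𝒜 a]
    refine Subalgebra.sum_mem _ (fun i _ => ?_)
    by_cases hi : i ≤ d
    · exact Algebra.subset_adjoin ⟨a, ha, i, hi, rfl⟩
    · rw [hdb a ha i (by omega)]
      exact Subalgebra.zero_mem _
  have hclosure : ∀ w ∈ Submonoid.closure T, ∃ lp : List (A × ℤ),
      (∀ p ∈ lp, p.1 ∈ 𝒜 p.2 ∧ p.2 ≤ d) ∧ (lp.map Prod.fst).prod = w ∧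
      w ∈ 𝒜 ((lp.map Prod.snd).sum) := by
    intro w hw
    induction hw using Submonoid.closure_induction with
    | mem x hx =>
      obtain ⟨a, ha, i, hi, rfl⟩ := hx
      refine ⟨[((DirectSum.decompose 𝒜 a i : A), i)], ?_, ?_, ?_⟩
      · rintro p hp
        rw [List.mem_singleton] at hp
        subst hp
        exact ⟨SetLike.coe_mem _, hi⟩
      · simp
      · simpa using SetLike.coe_mem _
    | one => exact ⟨[], by simp, by simp, by simpa using SetLike.one_mem_graded 𝒜⟩
    | mul x y hx hy ihx ihy =>
      obtain ⟨lx, hlx, hpx, hmx⟩ := ihx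
      obtain ⟨ly, hly, hpy, hmy⟩ := ihy
      refine ⟨lx ++ ly, ?_, ?_, ?_⟩
      · intro p hp
        rcases List.mem_append.mp hp with h | h
        · exact hlx p h
        · exact hly p h
      · rw [List.map_append, List.prod_append, hpx, hpy]
      · rw [List.map_append, List.sum_append]
        exact SetLike.mul_mem_graded hmx hmy
  intro n hn a e ha he
  have hspan : a ∈ Submodule.span k (Submonoid.closure T : Set A) := by
    have : a ∈ Subalgebra.toSubmodule (Algebra.adjoin k T) := by
      rw [hTtop]
      exact Submodule.mem_top
    rwa [Algebra.adjoin_eq_span] at this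
  have key : Submodule.span k (Submonoid.closure T : Set A) ≤
      Submodule.comap (pA 𝒜 e) (grJacobsonK k A 𝒜 ^ n) := by
    rw [Submodule.span_le]
    intro w hw
    obtain ⟨lp, hlp, hprod, hmem⟩ := hclosure w hw
    simp only [SetLike.mem_coe, Submodule.mem_comap, pA_apply]
    by_cases hee : (lp.map Prod.snd).sum = e
    · subst hee
      rw [DirectSum.decompose_of_mem_same 𝒜 hmem]
      rw [← hprod]
      exact lc 𝒜 hb hd hNb hN1 n hn lp hlp (by omega)
    · rw [DirectSum.decompose_of_mem_ne 𝒜 hmem hee]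
      exact Submodule.zero_mem _
  have := key hspan
  rw [Submodule.mem_comap, pA_apply, DirectSum.decompose_of_mem_same 𝒜 ha] at this
  exact this

end Aux

section AuxM

set_option linter.unusedSectionVars false

variable {k A}
variable (𝒜 : ℤ → Submodule k A) [GradedRing 𝒜]
variable {M : Type} [AddCommGroup M] [Module k M] [Module A M] [IsScalarTower k A M]
variable (ℳ : ℤ → Submodule k M) [DirectSum.Decomposition ℳ]

/-- degree-`q` projection of the module, as a `k`-linear map -/
noncomputable def pM (q : ℤ) : M →ₗ[k] M where
  toFun u := (DirectSum.decompose ℳ u q : M)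
  map_add' x y := by
    show (((decompose ℳ) (x + y) : ⨁ i, ℳ i) _ : M) = _
    rw [DirectSum.decompose_add, DirectSum.add_apply, Submodule.coe_add]
  map_smul' c x := by
    show (((decompose ℳ) (c • x) : ⨁ i, ℳ i) _ : M) = _
    rw [DirectSum.decompose_smul, DirectSum.smul_apply, SetLike.val_smul, RingHom.id_apply]

@[simp] theorem pM_apply (q : ℤ) (u : M) : pM ℳ q u = (DirectSum.decompose ℳ u q : M) := rfl

theorem smul_comm_kA (κ : k) (c : A) (u : M) : c • (κ • u) = κ • (c • u) := by
  rw [← IsScalarTower.algebraMap_smul A κ u, ← mul_smul, ← Algebra.commutes, mul_smul,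
    IsScalarTower.algebraMap_smul]

/-- scalar multiplication by `c : A` as a `k`-linear map -/
noncomputable def lcM (c : A) : M →ₗ[k] M where
  toFun u := c • u
  map_add' x y := smul_add c x y
  map_smul' κ u := smul_comm_kA κ c u

variable (hcompat : ∀ i j : ℤ, ∀ a ∈ 𝒜 i, ∀ m ∈ ℳ j, a • m ∈ ℳ (i + j))

include hcompat in
theorem hgm (c : A) {u : M} {e : ℤ} (hu : u ∈ ℳ e) (q : ℤ) :
    (DirectSum.decompose ℳ (c • u) q : M) = (DirectSum.decompose 𝒜 c (q - e) : A) • u := by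
  induction c using DirectSum.Decomposition.inductionOn 𝒜 with
  | zero =>
    rw [zero_smul]
    have h1 := map_zero (pM ℳ q)
    simp only [pM_apply] at h1
    have h2 := map_zero (pA 𝒜 (q - e))
    simp only [pA_apply] at h2
    rw [h1, h2, zero_smul]
  | @homogeneous i m =>
    by_cases hq : q = i + e
    · subst hq
      rw [DirectSum.decompose_of_mem_same ℳ (hcompat i e _ m.2 u hu)]
      rw [show i + e - e = i by ring, DirectSum.decompose_of_mem_same 𝒜 m.2]
    · rw [DirectSum.decompose_of_mem_ne ℳ (hcompat i e _ m.2 u hu) (fun h => hq h.symm)]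
      rw [DirectSum.decompose_of_mem_ne 𝒜 m.2 (show i ≠ q - e by omega), zero_smul]
  | add c₁ c₂ h₁ h₂ =>
    rw [add_smul]
    have h1 := map_add (pM ℳ q) (c₁ • u) (c₂ • u)
    simp only [pM_apply] at h1
    have h2 := map_add (pA 𝒜 (q - e)) c₁ c₂
    simp only [pA_apply] at h2
    rw [h1, h2, add_smul, h₁, h₂]

theorem mem_MgeSub {n j : ℤ} (h : n ≤ j) {u : M} (hu : u ∈ ℳ j) : u ∈ MgeSub k ℳ n := by
  have hle : ℳ j ≤ MgeSub k ℳ n := by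
    rw [MgeSub]
    exact le_iSup_of_le j (le_iSup_of_le h (le_refl _))
  exact hle hu

theorem MgeSub_le {n : ℤ} {V : Submodule k M} (h : ∀ j : ℤ, n ≤ j → ℳ j ≤ V) :
    MgeSub k ℳ n ≤ V := by
  rw [MgeSub]
  exact iSup_le (fun j => iSup_le (fun hj => h j hj))

include hcompat in
theorem smul_MgeSub {b : ℤ} (hb : ∀ i < b, 𝒜 i = ⊥) (c : A) {t : ℤ} {u : M}
    (hu : u ∈ MgeSub k ℳ t) : c • u ∈ MgeSub k ℳ (t + b) := by
  classical
  have key : MgeSub k ℳ t ≤ Submodule.comap (lcM c) (MgeSub k ℳ (t + b)) := by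
    refine MgeSub_le ℳ (fun j hj z hz => ?_)
    rw [Submodule.mem_comap]
    show c • z ∈ _
    have hcz : c • z = ∑ i ∈ (DirectSum.decompose 𝒜 c).support,
        (DirectSum.decompose 𝒜 c i : A) • z := by
      rw [← Finset.sum_smul, DirectSum.sum_support_decompose]
    rw [hcz]
    refine Submodule.sum_mem _ (fun i _ => ?_)
    by_cases hib : b ≤ i
    · have hmem := hcompat i j (DirectSum.decompose 𝒜 c i : A) (SetLike.coe_mem _) z hz
      exact mem_MgeSub ℳ (by omega) hmem
    · have : (DirectSum.decompose 𝒜 c i : A) = 0 := by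
        have hle : 𝒜 i ≤ ⊥ := le_of_eq (hb i (by omega))
        exact (Submodule.mem_bot k).mp (hle (SetLike.coe_mem _))
      rw [this, zero_smul]
      exact Submodule.zero_mem _
  exact key hu

include hcompat in
theorem In_smul_MgeSub {b : ℤ} (hb : ∀ i < b, 𝒜 i = ⊥) {τ : ℤ}
    (hτ : ∀ j : ℤ, j < τ → ∀ u : M, (DirectSum.decompose ℳ u j : M) = 0)
    {n : ℤ} {x : A} (hx : x ∈ In 𝒜 n) (u : M) :
    x • u ∈ MgeSub k ℳ (n + τ + b) := by
  classical
  induction hx using Submodule.span_induction generalizing u with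
  | mem x hxs =>
    obtain ⟨c, s', i, hi, hs, rfl⟩ := hxs
    rw [mul_smul]
    have hsu : s' • u ∈ MgeSub k ℳ (n + τ) := by
      have husum : u = ∑ e ∈ (DirectSum.decompose ℳ u).support,
          (DirectSum.decompose ℳ u e : M) := (DirectSum.sum_support_decompose ℳ u).symm
      rw [husum, Finset.smul_sum]
      refine Submodule.sum_mem _ (fun e _ => ?_)
      by_cases heτ : τ ≤ e
      · have hmem := hcompat i e s' hs (DirectSum.decompose ℳ u e : M) (SetLike.coe_mem _)
        exact mem_MgeSub ℳ (by omega) hmem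
      · rw [hτ e (by omega) u, smul_zero]
        exact Submodule.zero_mem _
    have := smul_MgeSub 𝒜 ℳ hcompat hb c hsu
    rwa [show n + τ + b = n + τ + b from rfl]
  | zero =>
    rw [zero_smul]; exact Submodule.zero_mem _
  | add x y hx hy ihx ihy =>
    rw [add_smul]; exact Submodule.add_mem _ (ihx u) (ihy u)
  | smul t x hx ihx =>
    rw [smul_assoc]; exact Submodule.smul_mem _ t (ihx u)

include hcompat in
theorem mlow {b : ℤ} (hb : ∀ i < b, 𝒜 i = ⊥) {S : Finset M}
    (hS : Submodule.span A (S : Set M) = ⊤) {Dmin : ℤ}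
    (hD : ∀ x ∈ S, ∀ e : ℤ, e < Dmin → (DirectSum.decompose ℳ x e : M) = 0) :
    ∀ j : ℤ, j < b + Dmin → ∀ u : M, (DirectSum.decompose ℳ u j : M) = 0 := by
  classical
  intro j hj u
  have hu : u ∈ Submodule.span A (S : Set M) := hS ▸ Submodule.mem_top
  obtain ⟨f, -, hf⟩ := Submodule.mem_span_finset.mp hu
  have : (DirectSum.decompose ℳ u j : M) = pM ℳ j u := rfl
  rw [this, ← hf, map_sum]
  refine Finset.sum_eq_zero (fun x hx => ?_)
  have hxsum : x = ∑ e ∈ (DirectSum.decompose ℳ x).support,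
      (DirectSum.decompose ℳ x e : M) := (DirectSum.sum_support_decompose ℳ x).symm
  have hfx : f x • x = ∑ e ∈ (DirectSum.decompose ℳ x).support,
      f x • (DirectSum.decompose ℳ x e : M) := by
    rw [← Finset.smul_sum, ← hxsum]
  rw [hfx, map_sum]
  refine Finset.sum_eq_zero (fun e he => ?_)
  have heD : Dmin ≤ e := by
    by_contra hc
    have := hD x hx e (by omega)
    rw [DFinsupp.mem_support_iff] at he
    exact he (Subtype.ext this)
  rw [pM_apply, hgm 𝒜 ℳ hcompat (f x) (SetLike.coe_mem _) j]
  have : (DirectSum.decompose 𝒜 (f x) (j - e) : A) = 0 := by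
    have hle : 𝒜 (j - e) ≤ ⊥ := le_of_eq (hb (j - e) (by omega))
    exact (Submodule.mem_bot k).mp (hle (SetLike.coe_mem _))
  rw [this, zero_smul]

end AuxM

/-- For a finitely generated commonly graded algebra `A` and a finitely generated graded
`A`-module `M`, the filtrations `{M_{≥n}}` and `{Jⁿ M}` are cofinal. -/
theorem stmt_7 (𝒜 : ℤ → Submodule k A) [GradedRing 𝒜] (hA : CommonlyGraded k A 𝒜)
    (hfgA : ∃ s : Finset A, Algebra.adjoin k (s : Set A) = ⊤)
    (M : Type) [AddCommGroup M] [Module k M] [Module A M] [IsScalarTower k A M]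
    (ℳ : ℤ → Submodule k M) (hint : DirectSum.IsInternal ℳ)
    (hcompat : ∀ i j : ℤ, ∀ a ∈ 𝒜 i, ∀ m ∈ ℳ j, a • m ∈ ℳ (i + j))
    (hfgM : Module.Finite A M) :
    (∀ n : ℤ, ∃ m : ℕ, ∀ x ∈ JpowSMul k A 𝒜 (M := M) m, x ∈ MgeSub k ℳ n) ∧
    (∀ n : ℕ, ∃ m : ℤ, ∀ x ∈ MgeSub k ℳ m, x ∈ JpowSMul k A 𝒜 (M := M) n) := by
  classical
  obtain ⟨hfin, b, hb⟩ := hA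
  obtain ⟨s, hs⟩ := hfgA
  letI : DirectSum.Decomposition ℳ := hint.chooseDecomposition
  have hb' : ∀ i < b, 𝒜 i = ⊥ := hb
  -- a degree bound for the generators of `A`
  have hFfin : (⋃ a ∈ (s : Set A), {i : ℤ | (DirectSum.decompose 𝒜 a i : A) ≠ 0}).Finite := by
    refine Set.Finite.biUnion s.finite_toSet (fun a _ => ?_)
    refine Set.Finite.subset (DirectSum.decompose 𝒜 a).support.finite_toSet ?_
    intro i hi
    rw [Finset.mem_coe, DFinsupp.mem_support_iff]
    intro h
    exact hi (by rw [h]; rfl)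
  obtain ⟨d₀, hd₀⟩ := hFfin.bddAbove
  set d : ℤ := max d₀ 1 with hddef
  have hd1 : (1 : ℤ) ≤ d := le_max_right _ _
  have hdb : ∀ a ∈ s, ∀ i : ℤ, d < i → (DirectSum.decompose 𝒜 a i : A) = 0 := by
    intro a ha i hi
    by_contra h
    have hiF : i ∈ ⋃ a ∈ (s : Set A), {i : ℤ | (DirectSum.decompose 𝒜 a i : A) ≠ 0} :=
      Set.mem_biUnion ha h
    have := hd₀ hiF
    omega
  set N : ℤ := max (1 - b) 1 with hNdef
  have hNb : 1 - b ≤ N := le_max_left _ _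
  have hN1 : (1 : ℤ) ≤ N := le_max_right _ _
  -- generators of M and their degree bounds
  obtain ⟨S, hS⟩ := hfgM.fg_top
  have hEfin : (⋃ x ∈ (S : Set M), {e : ℤ | (DirectSum.decompose ℳ x e : M) ≠ 0}).Finite := by
    refine Set.Finite.biUnion S.finite_toSet (fun x _ => ?_)
    refine Set.Finite.subset (DirectSum.decompose ℳ x).support.finite_toSet ?_
    intro e he
    rw [Finset.mem_coe, DFinsupp.mem_support_iff]
    intro h
    exact he (by rw [h]; rfl)
  obtain ⟨Dmax, hDmax⟩ := hEfin.bddAbove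
  obtain ⟨Dmin, hDmin⟩ := hEfin.bddBelow
  have hDlow : ∀ x ∈ S, ∀ e : ℤ, e < Dmin → (DirectSum.decompose ℳ x e : M) = 0 := by
    intro x hx e he
    by_contra h
    have heE : e ∈ ⋃ x ∈ (S : Set M), {e : ℤ | (DirectSum.decompose ℳ x e : M) ≠ 0} :=
      Set.mem_biUnion hx h
    have := hDmin heE
    omega
  have hDhigh : ∀ x ∈ S, ∀ e : ℤ, Dmax < e → (DirectSum.decompose ℳ x e : M) = 0 := by
    intro x hx e he
    by_contra h
    have heE : e ∈ ⋃ x ∈ (S : Set M), {e : ℤ | (DirectSum.decompose ℳ x e : M) ≠ 0} :=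
      Set.mem_biUnion hx h
    have := hDmax heE
    omega
  have hτ : ∀ j : ℤ, j < b + Dmin → ∀ u : M, (DirectSum.decompose ℳ u j : M) = 0 :=
    mlow 𝒜 ℳ hcompat hb' hS hDlow
  constructor
  · -- first cofinality: J^m M ⊆ M_{≥ n}
    intro n
    obtain ⟨m, hm1, hmIn⟩ := ring_lemma_A 𝒜 hb' hfin (n - (b + Dmin) - b)
    refine ⟨m, ?_⟩
    intro x hx
    set T : Set M :=
      {x : M | ∃ a ∈ (grJacobsonK k A 𝒜 ^ m : Submodule k A), ∃ y : M, x = a • y} with hTdef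
    have hWsmul : ∀ (c : A), ∀ z ∈ Submodule.span k T, c • z ∈ Submodule.span k T := by
      intro c z hz
      induction hz using Submodule.span_induction with
      | mem w hw =>
        obtain ⟨a, haJ, y, rfl⟩ := hw
        rw [← mul_smul]
        exact Submodule.subset_span ⟨c * a, (gli_Jpow 𝒜 m hm1).1 c a haJ, y, rfl⟩
      | zero => rw [smul_zero]; exact Submodule.zero_mem _
      | add w₁ w₂ hw₁ hw₂ ih₁ ih₂ => rw [smul_add]; exact Submodule.add_mem _ ih₁ ih₂
      | smul κ w hw ihw =>
        rw [smul_comm_kA κ c w]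
        exact Submodule.smul_mem _ κ ihw
    have hxk : x ∈ Submodule.span k T := by
      set W : Submodule A M :=
        { carrier := (Submodule.span k T : Set M)
          add_mem' := fun h h' => Submodule.add_mem _ h h'
          zero_mem' := Submodule.zero_mem _
          smul_mem' := fun c {z} hz => hWsmul c z hz } with hWdef
      have hJW : JpowSMul k A 𝒜 (M := M) m ≤ W := by
        rw [JpowSMul]
        exact Submodule.span_le.mpr (fun w hw => Submodule.subset_span hw)
      exact hJW hx
    have final : Submodule.span k T ≤ MgeSub k ℳ n := by
      rw [Submodule.span_le]
      rintro w ⟨a, haJ, y, rfl⟩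
      have haIn : a ∈ In 𝒜 (n - (b + Dmin) - b) := hmIn haJ
      have hres := In_smul_MgeSub 𝒜 ℳ hcompat hb' hτ haIn y
      rw [show n - (b + Dmin) - b + (b + Dmin) + b = n by ring] at hres
      exact hres
    exact final hxk
  · -- second cofinality: M_{≥ m} ⊆ J^n M
    intro n
    by_cases hn : n = 0
    · subst hn
      refine ⟨0, fun x _ => ?_⟩
      have h1 : (1 : A) ∈ (grJacobsonK k A 𝒜 ^ 0 : Submodule k A) := by
        rw [pow_zero, Submodule.one_eq_span]
        exact Submodule.subset_span rfl
      exact Submodule.subset_span ⟨1, h1, x, (one_smul A x).symm⟩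
    · have hn1 : 1 ≤ n := Nat.one_le_iff_ne_zero.mpr hn
      refine ⟨(n : ℤ) * (N + d) + Dmax, ?_⟩
      intro x hx
      have key : MgeSub k ℳ ((n : ℤ) * (N + d) + Dmax) ≤
          Submodule.restrictScalars k (JpowSMul k A 𝒜 (M := M) n) := by
        refine MgeSub_le ℳ (fun j hj u hu => ?_)
        show u ∈ JpowSMul k A 𝒜 (M := M) n
        have humem : u ∈ Submodule.span A (S : Set M) := hS ▸ Submodule.mem_top
        obtain ⟨f, -, hf⟩ := Submodule.mem_span_finset.mp humem
        have hu' : u = pM ℳ j u := (DirectSum.decompose_of_mem_same ℳ hu).symm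
        rw [hu', ← hf, map_sum]
        refine Submodule.sum_mem _ (fun x hxS => ?_)
        have hxsum : x = ∑ e ∈ (DirectSum.decompose ℳ x).support,
            (DirectSum.decompose ℳ x e : M) := (DirectSum.sum_support_decompose ℳ x).symm
        have hfx : f x • x = ∑ e ∈ (DirectSum.decompose ℳ x).support,
            f x • (DirectSum.decompose ℳ x e : M) := by
          rw [← Finset.smul_sum, ← hxsum]
        rw [hfx, map_sum]
        refine Submodule.sum_mem _ (fun e he => ?_)
        have hterm : pM ℳ j (f x • (DirectSum.decompose ℳ x e : M)) =
            (DirectSum.decompose 𝒜 (f x) (j - e) : A) • (DirectSum.decompose ℳ x e : M) := by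
          rw [pM_apply, hgm 𝒜 ℳ hcompat (f x) (SetLike.coe_mem _) j]
        rw [hterm]
        by_cases heD : e ≤ Dmax
        · have haJ : (DirectSum.decompose 𝒜 (f x) (j - e) : A) ∈
              (grJacobsonK k A 𝒜 ^ n : Submodule k A) := by
            refine homog_high 𝒜 hb' hs hd1 hdb hNb hN1 n hn1 (SetLike.coe_mem _) ?_
            omega
          exact Submodule.subset_span ⟨_, haJ, _, rfl⟩
        · rw [hDhigh x hxS e (by omega), smul_zero]
          exact Submodule.zero_mem _
      exact key hx
end

section
/- Let S = ⊕_{i=1}^n M_{r_i}(D_i) be a finite-dimensional semisimple k-algebra, regarded as graded in degree 0, and let φ be an automorphism of S. If V is an (S,S)-bimodule direct summand of {}^1 S^φ, then V ≅ {}^1 (⊕_{i∈I} M_{r_i}(D_i))^φ for some subset I ⊆ {1,...,n}. -/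
open MulOpposite

variable (k : Type) [Field k] (S : Type) [Ring S] [Algebra k S]

/-- An `(S,S)`-bimodule over the base field `k`. -/
structure KBimod where
  X : Type
  [acg : AddCommGroup X]
  [modk : Module k X]
  [modl : Module S X]
  [modr : Module Sᵐᵒᵖ X]
  [tl : IsScalarTower k S X]
  [tr : IsScalarTower k Sᵐᵒᵖ X]
  [comm : SMulCommClass S Sᵐᵒᵖ X]

attribute [instance] KBimod.acg KBimod.modk KBimod.modl KBimod.modr KBimod.tl KBimod.tr
  KBimod.comm

/-- Suppose `S = ⊕_{i=1}^n M_{rᵢ}(Dᵢ)` is a finite-dimensional semisimple algebra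
(regarded as graded in degree `0`), `φ` an automorphism of `S`.  If `V` is an
`(S,S)`-bimodule direct summand of the twisted bimodule `¹Sᵠ`, then
`V ≅ ¹(⊕_{i∈I} M_{rᵢ}(Dᵢ))ᵠ` for some subset `I ⊆ {1,…,n}` (the latter viewed as the
sub-bimodule of `¹Sᵠ` supported on the factors in `I`). -/
theorem stmt_10 (n : ℕ) (r : Fin n → ℕ) (D : Fin n → Type)
    [∀ i, DivisionRing (D i)] [∀ i, Algebra k (D i)]
    (isoS : S ≃ₐ[k] (∀ i : Fin n, Matrix (Fin (r i)) (Fin (r i)) (D i)))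
    (φ : S ≃ₐ[k] S) (V : KBimod k S)
    -- `V` is a bimodule direct summand of `¹Sᵠ`:
    (ι : V.X →ₗ[k] S) (π : S →ₗ[k] V.X)
    (hιl : ∀ (s : S) (x : V.X), ι (s • x) = s * ι x)
    (hιr : ∀ (s : S) (x : V.X), ι (op s • x) = ι x * φ s)
    (hπl : ∀ (s t : S), π (s * t) = s • π t)
    (hπr : ∀ (s t : S), π (t * φ s) = op s • π t)
    (hsplit : ∀ x : V.X, π (ι x) = x) :
    ∃ I : Set (Fin n), ∃ g : V.X →ₗ[k] S,
      Function.Injective g ∧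
      (∀ (s : S) (x : V.X), g (s • x) = s * g x) ∧
      (∀ (s : S) (x : V.X), g (op s • x) = g x * φ s) ∧
      Set.range g = {s : S | ∀ j : Fin n, j ∉ I → isoS s j = 0} := by
  classical
  set R := ∀ i : Fin n, Matrix (Fin (r i)) (Fin (r i)) (D i) with hR
  -- The image of `ι`, transported to `R`, is a two-sided ideal.
  have hzero : (0 : R) ∈ Set.range (fun x : V.X => isoS (ι x)) := ⟨0, by simp⟩
  have hadd : ∀ {a b : R}, a ∈ Set.range (fun x : V.X => isoS (ι x)) →
      b ∈ Set.range (fun x : V.X => isoS (ι x)) →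
      a + b ∈ Set.range (fun x : V.X => isoS (ι x)) := by
    rintro _ _ ⟨x, rfl⟩ ⟨y, rfl⟩; exact ⟨x + y, by simp⟩
  have hneg : ∀ {a : R}, a ∈ Set.range (fun x : V.X => isoS (ι x)) →
      -a ∈ Set.range (fun x : V.X => isoS (ι x)) := by
    rintro _ ⟨x, rfl⟩; exact ⟨-x, by simp⟩
  have hml : ∀ {a b : R}, b ∈ Set.range (fun x : V.X => isoS (ι x)) →
      a * b ∈ Set.range (fun x : V.X => isoS (ι x)) := by
    rintro a _ ⟨x, rfl⟩
    exact ⟨isoS.symm a • x, by simp [hιl]⟩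
  have hmr : ∀ {a b : R}, a ∈ Set.range (fun x : V.X => isoS (ι x)) →
      a * b ∈ Set.range (fun x : V.X => isoS (ι x)) := by
    rintro _ b ⟨x, rfl⟩
    refine ⟨op (φ.symm (isoS.symm b)) • x, ?_⟩
    simp [hιr]
  let J : TwoSidedIdeal R := TwoSidedIdeal.mk' (Set.range (fun x : V.X => isoS (ι x)))
    hzero hadd hneg hml hmr
  have memJ : ∀ a : R, a ∈ J ↔ a ∈ Set.range (fun x : V.X => isoS (ι x)) := fun a =>
    TwoSidedIdeal.mem_mk' _ _ _ _ _ _ a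
  refine ⟨{i : Fin n | ∃ x : V.X, isoS (ι x) i ≠ 0}, ι, ?_, hιl, hιr, ?_⟩
  · intro x y hxy
    have := congrArg π hxy
    simpa [hsplit] using this
  · ext s
    constructor
    · rintro ⟨x, rfl⟩ j hj
      simp only [Set.mem_setOf_eq, not_exists, not_not] at hj
      exact hj x
    · intro hs
      simp only [Set.mem_setOf_eq] at hs
      -- show `isoS s ∈ J`
      have key : isoS s ∈ J := by
        have hdecomp : isoS s = ∑ i : Fin n, Pi.single i (isoS s i) :=
          (Finset.univ_sum_single (isoS s)).symm
        rw [hdecomp]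
        refine sum_mem fun i _ => ?_
        by_cases hi : ∃ x : V.X, isoS (ι x) i ≠ 0
        · -- the component two-sided ideal is everything
          obtain ⟨x, hx⟩ := hi
          have hnontriv : Nonempty (Fin (r i)) := by
            by_contra hne
            have : IsEmpty (Fin (r i)) := not_nonempty_iff.mp hne
            exact hx (Subsingleton.elim _ _)
          let K : TwoSidedIdeal (Matrix (Fin (r i)) (Fin (r i)) (D i)) :=
            TwoSidedIdeal.mk' {a | (Pi.single i a : R) ∈ J}
              (by simp)
              (fun {a b} ha hb => by
                have : (Pi.single i (a + b) : R) = Pi.single i a + Pi.single i b := by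
                  ext j
                  rcases eq_or_ne j i with rfl | hj
                  · simp
                  · simp [Pi.single_apply, hj]
                simpa [this] using J.add_mem ha hb)
              (fun {a} ha => by
                have : (Pi.single i (-a) : R) = -(Pi.single i a) := by
                  ext j
                  rcases eq_or_ne j i with rfl | hj
                  · simp
                  · simp [Pi.single_apply, hj]
                show (Pi.single i (-a) : R) ∈ J
                rw [this]
                exact J.neg_mem ha)
              (fun {a b} hb => by
                have : (Pi.single i (a * b) : R) = Pi.single i a * Pi.single i b := by
                  ext j
                  rcases eq_or_ne j i with rfl | hj
                  · simp
                  · simp [Pi.single_apply, hj]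
                simpa [this] using J.mul_mem_left _ _ hb)
              (fun {a b} ha => by
                have : (Pi.single i (a * b) : R) = Pi.single i a * Pi.single i b := by
                  ext j
                  rcases eq_or_ne j i with rfl | hj
                  · simp
                  · simp [Pi.single_apply, hj]
                simpa [this] using J.mul_mem_right _ _ ha)
          have hmemK : ∀ a, a ∈ K ↔ (Pi.single i a : R) ∈ J := fun a =>
            TwoSidedIdeal.mem_mk' _ _ _ _ _ _ a
          have hwK : isoS (ι x) i ∈ K := by
            rw [hmemK]
            have h1 : (Pi.single i (isoS (ι x) i) : R) = Pi.single i 1 * isoS (ι x) := by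
              ext j
              rcases eq_or_ne j i with rfl | hj
              · simp [Pi.single_apply]
              · simp [Pi.single_apply, hj]
            rw [h1]
            exact J.mul_mem_left _ _ ((memJ _).mpr ⟨x, rfl⟩)
          have hKtop : K = ⊤ := by
            rcases eq_bot_or_eq_top K with hbot | htop
            · exfalso
              exact hx (by simpa [hbot] using hwK)
            · exact htop
          have : isoS s i ∈ K := hKtop ▸ TwoSidedIdeal.mem_top _
          exact (hmemK _).mp this
        · have : isoS s i = 0 := hs i hi
          rw [this]
          simpa using J.zero_mem
      obtain ⟨x, hx⟩ := (memJ _).mp key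
      exact ⟨x, isoS.injective hx⟩
end
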